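/- arXiv:1206.1526 — 11 statements merged into one kernel-verified Lean document; each statement's English description precedes it below -/
import Mathlib

section
/- Let G be an n×n complex matrix and let r, r¹ be nonnegative integers with r + r¹ < n. Suppose that (G^k)_{i,j} = 0 for all i = 1,…,r, all j = n−r¹+1,…,n, and all k = 1,…,n−1. Then there exist integers n₁ ≥ r and n₂ ≥ r¹ with n₁ + n₂ = n, and a unitary n×n matrix Ẽ of the block-diagonal form Ẽ = diag(I_r, E, I_{r¹}) (where E is a unitary (n−r−r¹)×(n−r−r¹) matrix and all off-diagonal blocks are zero), such that the matrix Ẽ†GẼ satisfies (Ẽ†GẼ)_{i,j} = 0 for all i = 1,…,n₁ and all j = n₁+1,…,n (i.e., Ẽ†GẼ is block lower triangular with a zero n₁×n₂ upper-right block). -/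
/-!
Let `K` be the span of the vectors `G ^ k e_j` with `j ≥ n - r¹`, the smallest `G`-invariant
subspace containing those basis vectors. By Cayley–Hamilton every power of `G` is a combination
of `G ^ 0, …, G ^ (n - 1)`, so `(G ^ k) i j = 0` for all `k`, i.e. `e_i ⊥ K` for `i < r`.
Taking `n₁ = dim Kᗮ`, `n₂ = dim K`, the columns of `Ẽ` are an orthonormal basis of `Kᗮ`
extending `e_0, …, e_(r-1)` followed by one of `K` extending the last `r¹` basis vectors;
`G K ⊆ K` then makes `⟪Ẽ_i, G Ẽ_j⟫` vanish for `i < n₁ ≤ j`.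
-/

open Matrix Module Submodule

theorem Matrix.pow_apply_eq_zero_of_forall_lt_card {R m : Type*} [CommRing R] [Nontrivial R]
    [Fintype m] [DecidableEq m] (A : Matrix m m R) {i j : m}
    (h : ∀ k < Fintype.card m, (A ^ k) i j = 0) (k : ℕ) : (A ^ k) i j = 0 := by
  have hdeg := A.charpoly_natDegree_eq_dim
  have hne : A.charpoly ≠ 1 := fun h1 => by
    simp [h1, eq_comm, (Fintype.card_pos_iff.2 ⟨i⟩).ne'] at hdeg
  rw [A.pow_eq_aeval_mod_charpoly, Polynomial.aeval_eq_sum_range'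
    (hdeg ▸ Polynomial.natDegree_modByMonic_lt _ A.charpoly_monic hne)]
  simp only [Matrix.sum_apply, Matrix.smul_apply, smul_eq_mul]
  exact Finset.sum_eq_zero fun t ht => by rw [h t (Finset.mem_range.1 ht), mul_zero]

theorem Module.End.apply_mem_span_iUnion_pow_image {R M : Type*} [Semiring R] [AddCommMonoid M]
    [Module R M] (f : Module.End R M) (S : Set M) {x : M}
    (hx : x ∈ span R (⋃ k : ℕ, (f ^ k) '' S)) : f x ∈ span R (⋃ k : ℕ, (f ^ k) '' S) := by
  suffices (span R (⋃ k : ℕ, (f ^ k) '' S)).map f ≤ span R (⋃ k : ℕ, (f ^ k) '' S) from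
    this (mem_map_of_mem hx)
  rw [map_span_le]
  rintro _ ⟨_, ⟨k, rfl⟩, y, hy, rfl⟩
  refine subset_span (Set.mem_iUnion.2 ⟨k + 1, y, hy, ?_⟩)
  rw [pow_succ', Module.End.mul_apply]

section InnerProductSpace

variable {𝕜 E ι : Type*} [RCLike 𝕜] [NormedAddCommGroup E] [InnerProductSpace 𝕜 E]

theorem Orthonormal.sumElim {κ : Type*} {v : ι → E} {w : κ → E} (hv : Orthonormal 𝕜 v)
    (hw : Orthonormal 𝕜 w) (hvw : ∀ i j, inner 𝕜 (v i) (w j) = 0) :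
    Orthonormal 𝕜 (Sum.elim v w) := by
  classical
  rw [orthonormal_iff_ite] at hv hw ⊢
  rintro (i | i) (j | j)
  · simpa using hv i j
  · simpa using hvw i j
  · simpa using inner_eq_zero_symm.1 (hvw j i)
  · simpa using hw i j

theorem Orthonormal.card_le_finrank_of_forall_mem [Fintype ι] {v : ι → E} (hv : Orthonormal 𝕜 v)
    (K : Submodule 𝕜 E) [FiniteDimensional 𝕜 K] (hvK : ∀ i, v i ∈ K) :
    Fintype.card ι ≤ finrank 𝕜 K :=
  (hv.codRestrict K hvK).linearIndependent.fintype_card_le_finrank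

variable [FiniteDimensional 𝕜 E]

theorem Submodule.exists_orthonormal_extension_of_card_eq [Fintype ι] (K : Submodule 𝕜 E)
    (hcard : Fintype.card ι = finrank 𝕜 K) {v : ι → E} (hv : Orthonormal 𝕜 v) {s : Set ι}
    (hvK : ∀ i ∈ s, v i ∈ K) :
    ∃ b : ι → E, Orthonormal 𝕜 b ∧ (∀ i, b i ∈ K) ∧ ∀ i ∈ s, b i = v i := by
  -- projecting onto `K` turns `v` into a family in `K` without changing it on `s`
  have hvs : s.domRestrict (fun i => K.orthogonalProjectionOnto (v i)) =
      Set.codRestrict (s.domRestrict v) K (fun i => hvK i i.2) := by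
    ext i
    exact congrArg Subtype.val (orthogonalProjectionOnto_mem_subspace_eq_self ⟨v i, hvK i i.2⟩)
  obtain ⟨b, hb⟩ := Orthonormal.exists_orthonormalBasis_extension_of_card_eq hcard.symm
    (hvs ▸ (hv.comp _ Subtype.val_injective).codRestrict K _)
  refine ⟨fun i => b i, b.orthonormal.comp_linearIsometry K.subtypeₗᵢ, fun i => (b i).2,
    fun i hi => ?_⟩
  change (b i : E) = v i
  rw [hb i hi, orthogonalProjectionOnto_mem_subspace_eq_self ⟨v i, hvK i hi⟩]

theorem Submodule.exists_orthonormal_extension_adapted [Fintype ι] (K : Submodule 𝕜 E)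
    (p : ι → Prop) [DecidablePred p] (hι : Fintype.card ι = finrank 𝕜 E)
    (hp : Fintype.card {i // p i} = finrank 𝕜 Kᗮ) {v : ι → E} (hv : Orthonormal 𝕜 v) {s : Set ι}
    (hv_perp : ∀ i ∈ s, p i → v i ∈ Kᗮ) (hv_mem : ∀ i ∈ s, ¬p i → v i ∈ K) :
    ∃ b : ι → E, Orthonormal 𝕜 b ∧ (∀ i, p i → b i ∈ Kᗮ) ∧ (∀ i, ¬p i → b i ∈ K) ∧
      ∀ i ∈ s, b i = v i := by
  have hnp : Fintype.card {i // ¬p i} = finrank 𝕜 K := by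
    rw [Fintype.card_subtype_compl, hι, hp, ← K.finrank_add_finrank_orthogonal, Nat.add_sub_cancel]
  obtain ⟨b₁, hb₁, hb₁K, hb₁v⟩ := Kᗮ.exists_orthonormal_extension_of_card_eq hp
    (hv.comp _ Subtype.val_injective) (s := Subtype.val ⁻¹' s) fun i hi => hv_perp i hi i.2
  obtain ⟨b₂, hb₂, hb₂K, hb₂v⟩ := K.exists_orthonormal_extension_of_card_eq hnp
    (hv.comp _ Subtype.val_injective) (s := Subtype.val ⁻¹' s) fun i hi => hv_mem i hi i.2
  refine ⟨Sum.elim b₁ b₂ ∘ (Equiv.sumCompl p).symm,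
    (hb₁.sumElim hb₂ fun i j => inner_eq_zero_symm.1 (hb₁K i _ (hb₂K j))).comp _
      (Equiv.injective _), fun i hi => ?_, fun i hi => ?_, fun i hi => ?_⟩
  · simpa [Equiv.sumCompl_symm_apply_of_pos hi] using hb₁K ⟨i, hi⟩
  · simpa [Equiv.sumCompl_symm_apply_of_neg hi] using hb₂K ⟨i, hi⟩
  · by_cases hpi : p i
    · simpa [Equiv.sumCompl_symm_apply_of_pos hpi] using hb₁v ⟨i, hpi⟩ hi
    · simpa [Equiv.sumCompl_symm_apply_of_neg hpi] using hb₂v ⟨i, hpi⟩ hi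

end InnerProductSpace

section EuclideanSpace

variable {𝕜 m κ : Type*} [RCLike 𝕜] [Fintype m]

theorem Matrix.conjTranspose_of_mul_of (u w : κ → EuclideanSpace 𝕜 m) :
    (of fun a b => u b a)ᴴ * of (fun a b => w b a) = of fun i j => inner 𝕜 (u i) (w j) := by
  ext i j
  simp [Matrix.mul_apply, PiLp.inner_apply, mul_comm]

variable [DecidableEq m]

theorem Matrix.inner_single_toEuclideanLin_single (A : Matrix m m 𝕜) (i j : m) :
    inner 𝕜 (EuclideanSpace.single i (1 : 𝕜)) (toEuclideanLin A (EuclideanSpace.single j 1)) =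
      A i j := by
  simp [EuclideanSpace.inner_single_left, Matrix.mulVec_single]

theorem Matrix.mul_of_eq_of_toEuclideanLin (A : Matrix m m 𝕜) (w : κ → EuclideanSpace 𝕜 m) :
    A * of (fun a b => w b a) = of fun a b => toEuclideanLin A (w b) a := by
  ext i j
  simp [Matrix.mul_apply, Matrix.mulVec, dotProduct]

theorem Orthonormal.apply_eq_ite_of_eq_single {b : m → EuclideanSpace 𝕜 m} (hb : Orthonormal 𝕜 b)
    {i : m} (hi : b i = EuclideanSpace.single i 1) (j : m) : b j i = if i = j then 1 else 0 := by
  simpa [hi, EuclideanSpace.inner_single_left] using orthonormal_iff_ite.1 hb i j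

theorem Matrix.exists_invariant_submodule_of_pow_apply_eq_zero (G : Matrix m m 𝕜) {A B : Set m}
    (hG : ∀ k, ∀ i ∈ A, ∀ j ∈ B, (G ^ k) i j = 0) :
    ∃ K : Submodule 𝕜 (EuclideanSpace 𝕜 m), (∀ x ∈ K, toEuclideanLin G x ∈ K) ∧
      (∀ i ∈ A, EuclideanSpace.single i 1 ∈ Kᗮ) ∧ ∀ j ∈ B, EuclideanSpace.single j 1 ∈ K := by
  set S := (fun j => EuclideanSpace.single j (1 : 𝕜)) '' B
  refine ⟨span 𝕜 (⋃ k : ℕ, (toEuclideanLin G ^ k) '' S),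
    fun x hx => Module.End.apply_mem_span_iUnion_pow_image (toEuclideanLin G) S hx, fun i hi => ?_,
    fun j hj => subset_span (Set.mem_iUnion.2 ⟨0, _, ⟨j, hj, rfl⟩, rfl⟩)⟩
  have hortho : span 𝕜 {EuclideanSpace.single i (1 : 𝕜)} ⟂
      span 𝕜 (⋃ k : ℕ, (toEuclideanLin G ^ k) '' S) := by
    rw [isOrtho_span]
    rintro _ rfl _ ⟨_, ⟨k, rfl⟩, _, ⟨j, hj, rfl⟩, rfl⟩
    rw [← toLpLin_pow, inner_single_toEuclideanLin_single, hG k i hi j hj]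
  exact hortho (mem_span_singleton_self _)

end EuclideanSpace

/-- **Fejér–Riesz paper, Lemma 4.8.**
Let `G` be an n×n complex matrix and `r`, `r¹` nonnegative integers with `r + r¹ < n`.
If `(G^k)_{i,j} = 0` for all rows `i < r` (0-indexed), all columns `j ≥ n - r¹`, and all
powers `1 ≤ k ≤ n-1`, then there are integers `n₁ ≥ r`, `n₂ ≥ r¹` with `n₁ + n₂ = n` and a
unitary n×n matrix `Ẽ` of the block-diagonal form `diag(I_r, E, I_{r¹})` (i.e. `Ẽ` agrees
with the identity on every row or column with index `< r` or `≥ n - r¹`) such that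
`Ẽᴴ G Ẽ` has a zero n₁×n₂ upper-right block. -/
theorem fejer_riesz_lemma_4_8 (n r r1 : ℕ) (hr : r + r1 < n)
    (G : Matrix (Fin n) (Fin n) ℂ)
    (hG : ∀ k : ℕ, 1 ≤ k → k ≤ n - 1 → ∀ i j : Fin n,
      (i : ℕ) < r → n - r1 ≤ (j : ℕ) → (G ^ k) i j = 0) :
    ∃ n1 n2 : ℕ, r ≤ n1 ∧ r1 ≤ n2 ∧ n1 + n2 = n ∧
      ∃ E : Matrix (Fin n) (Fin n) ℂ,
        Eᴴ * E = 1 ∧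
        (∀ i j : Fin n,
          ((i : ℕ) < r ∨ (j : ℕ) < r ∨ n - r1 ≤ (i : ℕ) ∨ n - r1 ≤ (j : ℕ)) →
          E i j = if i = j then 1 else 0) ∧
        (∀ i j : Fin n, (i : ℕ) < n1 → n1 ≤ (j : ℕ) → (Eᴴ * G * E) i j = 0) := by
  have hpow : ∀ k, ∀ i ∈ {i : Fin n | (i : ℕ) < r}, ∀ j ∈ {j : Fin n | n - r1 ≤ (j : ℕ)},
      (G ^ k) i j = 0 := fun k i hi j hj =>
    G.pow_apply_eq_zero_of_forall_lt_card (fun k hk => by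
      rcases Nat.eq_zero_or_pos k with rfl | hk0
      · exact one_apply_ne (Fin.ne_of_val_ne (by simp at hi hj; omega))
      · exact hG k hk0 (by simp at hk; omega) i j hi hj) k
  obtain ⟨K, hK_inv, he_perp, he_mem⟩ := G.exists_invariant_submodule_of_pow_apply_eq_zero hpow
  have he := EuclideanSpace.orthonormal_single (𝕜 := ℂ) (ι := Fin n)
  have hr_le : r ≤ finrank ℂ Kᗮ := by
    simpa using (he.comp _ (Fin.castLE_injective (by omega : r ≤ n))).card_le_finrank_of_forall_mem
      Kᗮ fun i => he_perp _ i.isLt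
  have hr1_le : r1 ≤ finrank ℂ K := by
    simpa using (he.comp _ (Fin.rev_injective.comp (Fin.castLE_injective (by omega : r1 ≤ n)))
      ).card_le_finrank_of_forall_mem K fun i => he_mem _ (by simp; omega)
  have hsum : finrank ℂ Kᗮ + finrank ℂ K = n := by
    rw [add_comm, K.finrank_add_finrank_orthogonal, finrank_euclideanSpace_fin]
  obtain ⟨b, hb, hb_perp, hb_mem, hb_e⟩ := K.exists_orthonormal_extension_adapted
    (fun j : Fin n => (j : ℕ) < finrank ℂ Kᗮ) (by simp) (Fintype.card_fin_lt_of_le (by omega)) he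
    (s := {j | (j : ℕ) < r ∨ n - r1 ≤ (j : ℕ)})
    (fun j hj hjK => he_perp j (by simp at hj ⊢; omega))
    (fun j hj hjK => he_mem j (by simp at hj ⊢; omega))
  refine ⟨_, _, hr_le, hr1_le, hsum, of fun i j => b j i, ?_, fun i j hij => ?_,
    fun i j hi hj => ?_⟩
  · ext i j
    simpa [conjTranspose_of_mul_of, one_apply] using orthonormal_iff_ite.1 hb i j
  · rw [of_apply]
    by_cases hj : (j : ℕ) < r ∨ n - r1 ≤ (j : ℕ)
    · simp [hb_e j hj]
    · exact hb.apply_eq_ite_of_eq_single (hb_e i (show _ ∨ _ by omega)) j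
  · rw [Matrix.mul_assoc, Matrix.mul_of_eq_of_toEuclideanLin, conjTranspose_of_mul_of, of_apply]
    exact inner_left_of_mem_orthogonal (hK_inv _ (hb_mem j (by omega))) (hb_perp i hi)
end

section
/- Fix positive integers m and n. Suppose that for every integer k ≥ n we are given complex matrices K_k and K¹_k of size m×k and matrices Γ_k and Γ¹_k of size k×(k+1) satisfying, for all k ≥ n: (a) K_k·(K¹_k)ᵀ = 0; (b) Γ¹_{k+1}·Γ†_{k+1} = Γ†_k·Γ¹_k; (c) K_{k+1} = K_k·Γ¹_k; (d) (K¹_{k+1})ᵀ = Γ†_k·(K¹_k)ᵀ. Then K_k·[Γ¹_k·Γ†_k]^j·(K¹_k)ᵀ = 0 for every integer j ≥ 0 and every k ≥ n. -/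
/-!
Unrolling one factor of the power, `K (A B)^(j+1) L = (K A) (B A)^j (B L)`, and the recursions
(b)–(d) identify `K k (Γ1 k Γ kᴴ)^(j+1) (K1 k)ᵀ` with `K (k+1) (Γ1 (k+1) Γ (k+1)ᴴ)^j (K1 (k+1))ᵀ`.
Inducting on `j` (for all `k ≥ n` at once) reduces everything to (a).
-/

open Matrix

namespace Matrix

variable {ι κ μ ρ : Type*} [Fintype ι] [DecidableEq ι] [Fintype κ] [DecidableEq κ]
  [Fintype μ] {α : Type*} [Semiring α]

theorem mul_pow_succ_eq_mul_pow_mul (A : Matrix ι κ α) (B : Matrix κ ι α) (j : ℕ) :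
    (A * B) ^ (j + 1) = A * (B * A) ^ j * B := by
  induction j with
  | zero => simp
  | succ j ih => rw [pow_succ, ih, pow_succ]; simp only [Matrix.mul_assoc]

theorem mul_mul_pow_succ_mul_eq_of_intertwine {K : Matrix ρ ι α} {L : Matrix ι ρ α}
    {A : Matrix ι κ α} {B : Matrix κ ι α} {K' : Matrix ρ κ α} {L' : Matrix κ ρ α}
    {A' : Matrix κ μ α} {B' : Matrix μ κ α}
    (hK : K' = K * A) (hL : L' = B * L) (hAB : A' * B' = B * A) (j : ℕ) :
    K * (A * B) ^ (j + 1) * L = K' * (A' * B') ^ j * L' := by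
  rw [mul_pow_succ_eq_mul_pow_mul, hK, hL, hAB]
  simp only [Matrix.mul_assoc]

end Matrix

theorem fejer_riesz_lemma_4_3_general (m n : ℕ)
    (K K1 : (k : ℕ) → Matrix (Fin m) (Fin k) ℂ)
    (Γ Γ1 : (k : ℕ) → Matrix (Fin k) (Fin (k + 1)) ℂ)
    (ha : ∀ k, n ≤ k → K k * (K1 k)ᵀ = 0)
    (hb : ∀ k, n ≤ k → Γ1 (k + 1) * (Γ (k + 1))ᴴ = (Γ k)ᴴ * Γ1 k)
    (hc : ∀ k, n ≤ k → K (k + 1) = K k * Γ1 k)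
    (hd : ∀ k, n ≤ k → (K1 (k + 1))ᵀ = (Γ k)ᴴ * (K1 k)ᵀ) :
    ∀ (j : ℕ) (k : ℕ), n ≤ k → K k * (Γ1 k * (Γ k)ᴴ) ^ j * (K1 k)ᵀ = 0 := by
  intro j
  induction j with
  | zero => intro k hk; simpa using ha k hk
  | succ j ih =>
    intro k hk
    rw [mul_mul_pow_succ_mul_eq_of_intertwine (hc k hk) (hd k hk) (hb k hk)]
    exact ih (k + 1) (Nat.le_succ_of_le hk)

/-- **Fejér–Riesz paper, Lemma 4.3.**
Suppose that for every `k ≥ n` we are given complex matrices `K k`, `K1 k` of size m×k and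
`Γ k`, `Γ1 k` of size k×(k+1) satisfying, for all `k ≥ n`:
(a) `K k · (K1 k)ᵀ = 0`;
(b) `Γ1 (k+1) · (Γ (k+1))ᴴ = (Γ k)ᴴ · Γ1 k`;
(c) `K (k+1) = K k · Γ1 k`;
(d) `(K1 (k+1))ᵀ = (Γ k)ᴴ · (K1 k)ᵀ`.
Then `K k · [Γ1 k · (Γ k)ᴴ]^j · (K1 k)ᵀ = 0` for every `j ≥ 0` and every `k ≥ n`. -/
theorem fejer_riesz_lemma_4_3 (m n : ℕ) (hm : 0 < m) (hn : 0 < n)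
    (K K1 : (k : ℕ) → Matrix (Fin m) (Fin k) ℂ)
    (Γ Γ1 : (k : ℕ) → Matrix (Fin k) (Fin (k + 1)) ℂ)
    (ha : ∀ k, n ≤ k → K k * (K1 k)ᵀ = 0)
    (hb : ∀ k, n ≤ k → Γ1 (k + 1) * (Γ (k + 1))ᴴ = (Γ k)ᴴ * Γ1 k)
    (hc : ∀ k, n ≤ k → K (k + 1) = K k * Γ1 k)
    (hd : ∀ k, n ≤ k → (K1 (k + 1))ᵀ = (Γ k)ᴴ * (K1 k)ᵀ) :
    ∀ (j : ℕ) (k : ℕ), n ≤ k → K k * (Γ1 k * (Γ k)ᴴ) ^ j * (K1 k)ᵀ = 0 :=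
  fejer_riesz_lemma_4_3_general m n K K1 Γ Γ1 ha hb hc hd
end

section
/- Fix positive integers m and n. Suppose that for every integer k ≥ n we are given complex matrices K_k and K¹_k of size m×k and matrices Γ_k and Γ¹_k of size k×(k+1) satisfying, for all k ≥ n: (b) Γ¹_{k+1}·Γ†_{k+1} = Γ†_k·Γ¹_k; (c) K_{k+1} = K_k·Γ¹_k; (d) (K¹_{k+1})ᵀ = Γ†_k·(K¹_k)ᵀ. Then for every k ≥ n and every integer j ≥ 0, K_{k+j}·(K¹_{k+j})ᵀ = K_k·[Γ¹_k·Γ†_k]^j·(K¹_k)ᵀ. -/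
/-!
Write `M k = Γ1 k · (Γ k)ᴴ`. Relations (c) and (d) turn `K (k+1) · M (k+1)^i · (K1 (k+1))ᵀ` into
`K k · Γ1 k · ((Γ k)ᴴ · Γ1 k)^i · (Γ k)ᴴ · (K1 k)ᵀ`, using (b) for `M (k+1)`. Regrouping the
rectangular factors gives `K k · M k^(i+1) · (K1 k)ᵀ`, so each step down in the index moves one
factor `M k` into the power; induction on `j` (with `i` generalised) telescopes the identity.
-/

open Matrix

namespace Matrix

variable {R l m : Type*} [Semiring R] [Fintype l] [Fintype m] [DecidableEq l] [DecidableEq m]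

theorem mul_pow_mul_rect (A : Matrix l m R) (B : Matrix m l R) (i : ℕ) :
    (A * B) ^ i * A = A * (B * A) ^ i := by
  induction i with
  | zero => simp
  | succ i ih => simp only [pow_succ', Matrix.mul_assoc, ih]

end Matrix

section Telescope

variable {R ι κ : Type*} [Semiring R] (n : ℕ) (K : (k : ℕ) → Matrix ι (Fin k) R)
  (L : (k : ℕ) → Matrix (Fin k) κ R)
  (A : (k : ℕ) → Matrix (Fin k) (Fin (k + 1)) R) (B : (k : ℕ) → Matrix (Fin (k + 1)) (Fin k) R)

theorem mul_pow_mul_succ_eq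
    (hAB : ∀ k, n ≤ k → A (k + 1) * B (k + 1) = B k * A k)
    (hK : ∀ k, n ≤ k → K (k + 1) = K k * A k) (hL : ∀ k, n ≤ k → L (k + 1) = B k * L k)
    (k : ℕ) (hk : n ≤ k) (i : ℕ) :
    K (k + 1) * (A (k + 1) * B (k + 1)) ^ i * L (k + 1) = K k * (A k * B k) ^ (i + 1) * L k := by
  rw [hAB k hk, hK k hk, hL k hk]
  calc K k * A k * (B k * A k) ^ i * (B k * L k)
      = K k * (A k * (B k * A k) ^ i) * B k * L k := by simp only [Matrix.mul_assoc]
    _ = K k * ((A k * B k) ^ i * A k) * B k * L k := by rw [Matrix.mul_pow_mul_rect]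
    _ = K k * (A k * B k) ^ (i + 1) * L k := by simp only [pow_succ, Matrix.mul_assoc]

theorem mul_pow_mul_add_eq
    (hAB : ∀ k, n ≤ k → A (k + 1) * B (k + 1) = B k * A k)
    (hK : ∀ k, n ≤ k → K (k + 1) = K k * A k) (hL : ∀ k, n ≤ k → L (k + 1) = B k * L k)
    (k : ℕ) (hk : n ≤ k) (j i : ℕ) :
    K (k + j) * (A (k + j) * B (k + j)) ^ i * L (k + j) = K k * (A k * B k) ^ (i + j) * L k := by
  induction j generalizing i with
  | zero => rfl
  | succ j ih =>
    rw [← add_assoc, mul_pow_mul_succ_eq n K L A B hAB hK hL (k + j) (le_add_right hk), ih,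
      add_right_comm, add_assoc]

end Telescope

theorem fejer_riesz_eq_4_9_general (m n : ℕ)
    (K K1 : (k : ℕ) → Matrix (Fin m) (Fin k) ℂ)
    (Γ Γ1 : (k : ℕ) → Matrix (Fin k) (Fin (k + 1)) ℂ)
    (hb : ∀ k, n ≤ k → Γ1 (k + 1) * (Γ (k + 1))ᴴ = (Γ k)ᴴ * Γ1 k)
    (hc : ∀ k, n ≤ k → K (k + 1) = K k * Γ1 k)
    (hd : ∀ k, n ≤ k → (K1 (k + 1))ᵀ = (Γ k)ᴴ * (K1 k)ᵀ) :
    ∀ (k : ℕ), n ≤ k → ∀ (j : ℕ),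
      K (k + j) * (K1 (k + j))ᵀ = K k * (Γ1 k * (Γ k)ᴴ) ^ j * (K1 k)ᵀ := by
  intro k hk j
  simpa using mul_pow_mul_add_eq n K (fun k => (K1 k)ᵀ) Γ1 (fun k => (Γ k)ᴴ) hb hc hd k hk j 0

/-- **Fejér–Riesz paper, equation (4.9).**
Suppose that for every `k ≥ n` we are given complex matrices `K k`, `K1 k` of size m×k and
`Γ k`, `Γ1 k` of size k×(k+1) satisfying, for all `k ≥ n`:
(b) `Γ1 (k+1) · (Γ (k+1))ᴴ = (Γ k)ᴴ · Γ1 k`;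
(c) `K (k+1) = K k · Γ1 k`;
(d) `(K1 (k+1))ᵀ = (Γ k)ᴴ · (K1 k)ᵀ`.
Then for every `k ≥ n` and every `j ≥ 0`,
`K (k+j) · (K1 (k+j))ᵀ = K k · [Γ1 k · (Γ k)ᴴ]^j · (K1 k)ᵀ`. -/
theorem fejer_riesz_eq_4_9 (m n : ℕ) (hm : 0 < m) (hn : 0 < n)
    (K K1 : (k : ℕ) → Matrix (Fin m) (Fin k) ℂ)
    (Γ Γ1 : (k : ℕ) → Matrix (Fin k) (Fin (k + 1)) ℂ)
    (hb : ∀ k, n ≤ k → Γ1 (k + 1) * (Γ (k + 1))ᴴ = (Γ k)ᴴ * Γ1 k)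
    (hc : ∀ k, n ≤ k → K (k + 1) = K k * Γ1 k)
    (hd : ∀ k, n ≤ k → (K1 (k + 1))ᵀ = (Γ k)ᴴ * (K1 k)ᵀ) :
    ∀ (k : ℕ), n ≤ k → ∀ (j : ℕ),
      K (k + j) * (K1 (k + j))ᵀ = K k * (Γ1 k * (Γ k)ᴴ) ^ j * (K1 k)ᵀ :=
  fejer_riesz_eq_4_9_general m n K K1 Γ Γ1 hb hc hd
end

section
/- Let n, m be nonnegative integers, let p ∈ ℂ[z,w] be a polynomial of degree at most (n,m), and let ←p(z,w) = zⁿwᵐ·conj(p(1/conj(z), 1/conj(w))) be its reverse polynomial. Suppose there exist polynomials φ₀,…,φ_m ∈ ℂ[z,w] such that: (1) for all z ∈ ℂ with |z| = 1 and all w, w₁ ∈ ℂ, p(z,w)·conj(p(z,w₁)) − w·conj(w₁)·←p(z,w)·conj(←p(z,w₁)) = (1 − w·conj(w₁))·Σ_{j=0}^{m} φ_j(z,w)·conj(φ_j(z,w₁)); and (2) for every z with |z| = 1 and every w ∈ ℂ, the vector (φ₀(z,w),…,φ_m(z,w)) is not the zero vector. Then p(z,w) ≠ 0 for all z, w with |z|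 = 1 and |w| ≤ 1. -/
/-!
Fix `z` on the unit circle; the hypothesis is then a Christoffel–Darboux identity in `w` for
`P = p(z,·)`, `R = ←p(z,·)` and the `Φⱼ = φⱼ(z,·)`. On the diagonal `w₁ = w` it reads
`|P w|² - |w|²|R w|² = (1 - |w|²) ∑ⱼ |Φⱼ w|²`, so a zero of `P` in the open disc forces all `Φⱼ w`
to vanish. On the circle `|w| = 1` a zero of `P` is also a zero of `R` (as `1/conj w = w`), and
then the identity shows that `u ↦ ∑ⱼ Φⱼ w · conj (Φⱼ u)` vanishes off the single point where
`w · conj u = 1`; by continuity it vanishes at `u = w` too, which is again `∑ⱼ |Φⱼ w|² = 0`.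
-/

open MvPolynomial ComplexConjugate Complex

lemma Complex.one_div_conj_of_norm_eq_one {z : ℂ} (hz : ‖z‖ = 1) : 1 / conj z = z := by
  rw [one_div, inv_eq_conj (by rwa [norm_conj]), conj_conj]

lemma Complex.one_sub_mul_conj_ne_zero {w u : ℂ} (hu : u ≠ (conj w)⁻¹) : 1 - w * conj u ≠ 0 := by
  intro h
  refine hu (eq_inv_of_mul_eq_one_right ?_)
  simpa using congrArg conj (sub_eq_zero.mp h).symm

section ChristoffelDarboux

variable {ι : Type*} [Fintype ι]

def ChristoffelDarbouxIdentity (P R : ℂ → ℂ) (Φ : ι → ℂ → ℂ) : Prop :=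
  ∀ w w₁ : ℂ, P w * conj (P w₁) - w * conj w₁ * R w * conj (R w₁) =
    (1 - w * conj w₁) * ∑ j, Φ j w * conj (Φ j w₁)

lemma eq_zero_of_sum_normSq_eq_zero {f : ι → ℂ} (h : ∑ j, normSq (f j) = 0) (j : ι) :
    f j = 0 :=
  normSq_eq_zero.mp <|
    (Finset.sum_eq_zero_iff_of_nonneg fun i _ => normSq_nonneg (f i)).mp h j (Finset.mem_univ j)

namespace ChristoffelDarbouxIdentity

variable {P R : ℂ → ℂ} {Φ : ι → ℂ → ℂ}

lemma normSq_eq (h : ChristoffelDarbouxIdentity P R Φ) (w : ℂ) :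
    normSq (P w) - normSq w * normSq (R w) = (1 - normSq w) * ∑ j, normSq (Φ j w) := by
  apply ofReal_injective
  push_cast
  simp only [← mul_conj]
  linear_combination h w w

lemma apply_eq_zero_of_norm_lt_one (h : ChristoffelDarbouxIdentity P R Φ) {w : ℂ}
    (hw : ‖w‖ < 1) (hP : P w = 0) (j : ι) : Φ j w = 0 := by
  have hw' : normSq w < 1 := by
    rw [← Complex.sq_norm]
    nlinarith [norm_nonneg w]
  have hsum := h.normSq_eq w
  rw [hP, map_zero] at hsum
  refine eq_zero_of_sum_normSq_eq_zero (f := fun i => Φ i w) (le_antisymm ?_ ?_) j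
  · nlinarith [normSq_nonneg w, normSq_nonneg (R w)]
  · exact Finset.sum_nonneg fun i _ => normSq_nonneg (Φ i w)

lemma apply_eq_zero_of_eq_zero (h : ChristoffelDarbouxIdentity P R Φ)
    (hΦ : ∀ j, Continuous (Φ j)) {w : ℂ} (hP : P w = 0) (hR : R w = 0) (j : ι) :
    Φ j w = 0 := by
  set G : ℂ → ℂ := fun u => ∑ j, Φ j w * conj (Φ j u)
  have hG : Continuous G :=
    continuous_finsetSum _ fun j _ => continuous_const.mul (continuous_conj.comp (hΦ j))
  have hG_off : Set.EqOn G 0 {(conj w)⁻¹}ᶜ := fun u hu => by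
    have hwu := h w u
    simp only [hP, hR, zero_mul, mul_zero, sub_zero] at hwu
    exact (mul_eq_zero.mp hwu.symm).resolve_left (one_sub_mul_conj_ne_zero hu)
  have hGw : G w = 0 := congrFun (hG.ext_on (dense_compl_singleton _) continuous_const hG_off) w
  refine eq_zero_of_sum_normSq_eq_zero (f := fun i => Φ i w) ?_ j
  exact_mod_cast (by simpa only [G, mul_conj] using hGw : ∑ j, (normSq (Φ j w) : ℂ) = 0)

end ChristoffelDarbouxIdentity

end ChristoffelDarboux

lemma MvPolynomial.continuous_eval_fixed_fst (z : ℂ) (q : MvPolynomial (Fin 2) ℂ) :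
    Continuous fun w : ℂ => eval ![z, w] q :=
  (continuous_eval q).comp <| continuous_pi fun i => by
    fin_cases i
    · exact continuous_const
    · exact continuous_id

theorem fejer_riesz_lemma_4_4_stability_general (n m : ℕ) (p revp : MvPolynomial (Fin 2) ℂ)
    (hrev : ∀ z w : ℂ, z ≠ 0 → w ≠ 0 →
      eval ![z, w] revp =
        z ^ n * w ^ m *
          (starRingEnd ℂ) (eval ![1 / (starRingEnd ℂ) z, 1 / (starRingEnd ℂ) w] p))
    (φ : Fin (m + 1) → MvPolynomial (Fin 2) ℂ)
    (h1 : ∀ z w w1 : ℂ, ‖z‖ = 1 →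
      eval ![z, w] p * (starRingEnd ℂ) (eval ![z, w1] p) -
          w * (starRingEnd ℂ) w1 * eval ![z, w] revp *
            (starRingEnd ℂ) (eval ![z, w1] revp) =
        (1 - w * (starRingEnd ℂ) w1) *
          ∑ j : Fin (m + 1), eval ![z, w] (φ j) * (starRingEnd ℂ) (eval ![z, w1] (φ j)))
    (h2 : ∀ z w : ℂ, ‖z‖ = 1 → ∃ j : Fin (m + 1), eval ![z, w] (φ j) ≠ 0) :
    ∀ z w : ℂ, ‖z‖ = 1 → ‖w‖ ≤ 1 → eval ![z, w] p ≠ 0 := by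
  intro z w hz hw hp
  have hCD : ChristoffelDarbouxIdentity (fun w => eval ![z, w] p) (fun w => eval ![z, w] revp)
      (fun j w => eval ![z, w] (φ j)) := fun w w₁ => h1 z w w₁ hz
  obtain ⟨j, hj⟩ := h2 z w hz
  rcases hw.lt_or_eq with hw_lt | hw_eq
  · exact hj (hCD.apply_eq_zero_of_norm_lt_one hw_lt hp j)
  · have hR : eval ![z, w] revp = 0 := by
      rw [hrev z w (norm_pos_iff.mp (by simp [hz])) (norm_pos_iff.mp (by simp [hw_eq])),
        one_div_conj_of_norm_eq_one hz, one_div_conj_of_norm_eq_one hw_eq, hp, map_zero, mul_zero]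
    exact hj (hCD.apply_eq_zero_of_eq_zero (fun j => continuous_eval_fixed_fst z (φ j)) hp hR j)

/-- **Fejér–Riesz paper, Lemma 4.4 (stability part).**
Let `p ∈ ℂ[z,w]` have degree at most `(n,m)` and let `revp` be its reverse polynomial,
characterized by `revp(z,w) = zⁿwᵐ·conj(p(1/conj z, 1/conj w))` for `z, w ≠ 0`.
If there are polynomials `φ₀, …, φ_m` such that for `|z| = 1` the Christoffel–Darboux-type
identity
`p(z,w)·conj(p(z,w₁)) − w·conj(w₁)·revp(z,w)·conj(revp(z,w₁))
  = (1 − w·conj(w₁))·∑_j φ_j(z,w)·conj(φ_j(z,w₁))`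
holds, and the vector `(φ₀(z,w), …, φ_m(z,w))` never vanishes for `|z| = 1`, then
`p(z,w) ≠ 0` whenever `|z| = 1` and `|w| ≤ 1`. -/
theorem fejer_riesz_lemma_4_4_stability (n m : ℕ) (p revp : MvPolynomial (Fin 2) ℂ)
    (hdeg : ∀ d ∈ p.support, d 0 ≤ n ∧ d 1 ≤ m)
    (hrev : ∀ z w : ℂ, z ≠ 0 → w ≠ 0 →
      eval ![z, w] revp =
        z ^ n * w ^ m *
          (starRingEnd ℂ) (eval ![1 / (starRingEnd ℂ) z, 1 / (starRingEnd ℂ) w] p))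
    (φ : Fin (m + 1) → MvPolynomial (Fin 2) ℂ)
    (h1 : ∀ z w w1 : ℂ, ‖z‖ = 1 →
      eval ![z, w] p * (starRingEnd ℂ) (eval ![z, w1] p) -
          w * (starRingEnd ℂ) w1 * eval ![z, w] revp *
            (starRingEnd ℂ) (eval ![z, w1] revp) =
        (1 - w * (starRingEnd ℂ) w1) *
          ∑ j : Fin (m + 1), eval ![z, w] (φ j) * (starRingEnd ℂ) (eval ![z, w1] (φ j)))
    (h2 : ∀ z w : ℂ, ‖z‖ = 1 → ∃ j : Fin (m + 1), eval ![z, w] (φ j) ≠ 0) :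
    ∀ z w : ℂ, ‖z‖ = 1 → ‖w‖ ≤ 1 → eval ![z, w] p ≠ 0 :=
  fejer_riesz_lemma_4_4_stability_general n m p revp hrev φ h1 h2
end

section
/- Let m ≥ 0 and let p₀, p₁, …, p_m ∈ ℂ. Define the polynomials p(w) = Σ_{l=0}^{m} p_l w^l and ←p(w) = Σ_{l=0}^{m} conj(p_{m−l}) w^l. Define (m+1)×(m+1) complex matrices A and B (rows and columns indexed 0,…,m) by A_{ij} = p_{i−j} if i ≥ j and A_{ij} = 0 otherwise, and B_{ij} = p_{m+1+i−j} if j ≥ i+1 and B_{ij} = 0 otherwise. Then for all w, η ∈ ℂ: p(w)·conj(p(η)) − w·conj(η)·←p(w)·conj(←p(η)) = (1 − w·conj(η)) · u(w)ᵀ · (A·A† − B†·B) · v(η), where u(w) = (1, w, …, w^m)ᵀ and v(η) = (1, conj(η), …, conj(η)^m)ᵀ. -/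
/-! With `u = u(w)` and `v = v(η) = star u(η)`, the right-hand side is `1 - w η̄` times the
Gram form `∑ₖ Gₖ(w) conj Gₖ(η) - Hₖ(w) conj Hₖ(η)` of the rows `G = uᵀ A` and `H = uᵀ Bᴴ`,
whose entries are shifted truncations of `p` and `←p`: `Gₖ(w) = wᵏ ∑_{s ≤ m-k} p_s wˢ` and
`Hₖ(w) = wᵏ ∑_{s < m-k} conj p_{m-s} w^{s+1}`. Expanding the products and summing, for each
pair of coefficients, the geometric series in `k` leaves `p(w) conj p(η) - w η̄ ←p(w) conj ←p(η)`
up to two boundary sums, which coincide after reflecting both summation indices. -/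

open Matrix Finset ComplexConjugate

section GeometricTelescoping

variable {R : Type*}

/-- The conditions `N ≤ K`, `N ≤ M` only add indices at which the truncated differences
`N - k`, `N - max s t` vanish. -/
theorem sum_range_sum_range_sub_comm [AddCommMonoid R] {K M N : ℕ} (hK : N ≤ K) (hM : N ≤ M)
    (g : ℕ → ℕ → ℕ → R) :
    ∑ k ∈ range K, ∑ s ∈ range (N - k), ∑ t ∈ range (N - k), g k s t =
      ∑ s ∈ range M, ∑ t ∈ range M, ∑ k ∈ range (N - max s t), g k s t := by
  simp only [← sum_product']
  refine sum_comm' fun k st => ?_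
  simp only [mem_product, mem_range]
  omega

theorem one_sub_mul_sum_range_sum_range_sub [CommRing R] {K M N : ℕ} (hK : N ≤ K) (hM : N ≤ M)
    (c : ℕ → ℕ → R) (z : R) :
    (1 - z) * ∑ k ∈ range K, ∑ s ∈ range (N - k), ∑ t ∈ range (N - k), c s t * z ^ k =
      ∑ s ∈ range M, ∑ t ∈ range M, c s t * (1 - z ^ (N - max s t)) := by
  rw [sum_range_sum_range_sub_comm hK hM, mul_sum]
  refine sum_congr rfl fun s _ => ?_
  rw [mul_sum]
  refine sum_congr rfl fun t _ => ?_
  rw [← mul_sum, ← mul_neg_geom_sum]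
  ring

theorem sum_range_reflect_reflect [AddCommMonoid R] (F : ℕ → ℕ → R) (m : ℕ) :
    ∑ s ∈ range (m + 1), ∑ t ∈ range (m + 1), F (m - s) (m - t) =
      ∑ s ∈ range (m + 1), ∑ t ∈ range (m + 1), F s t := by
  rw [← sum_range_reflect (fun s => ∑ t ∈ range (m + 1), F s t), Nat.add_sub_cancel]
  exact sum_congr rfl fun s _ => by rw [← sum_range_reflect (F (m - s)), Nat.add_sub_cancel]

theorem sum_sum_mul_pow_sub_max_eq_reflect [CommSemiring R] (m : ℕ) (a b : ℕ → R) (x y : R) :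
    ∑ s ∈ range (m + 1), ∑ t ∈ range (m + 1),
        a s * x ^ s * (b t * y ^ t) * (x * y) ^ (m + 1 - max s t) =
      ∑ s ∈ range (m + 1), ∑ t ∈ range (m + 1),
        b (m - s) * x ^ (s + 1) * (a (m - t) * y ^ (t + 1)) * (x * y) ^ (m - max s t) := by
  rw [← sum_range_reflect_reflect _ m, sum_comm]
  refine sum_congr rfl fun s hs => sum_congr rfl fun t ht => ?_
  rw [mem_range] at hs ht
  set E := m + 1 - max (m - t) (m - s)
  have hx : m - t + E = s + 1 + (m - max s t) := by omega
  have hy : m - s + E = t + 1 + (m - max s t) := by omega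
  calc _ = a (m - t) * b (m - s) * (x ^ (m - t + E) * y ^ (m - s + E)) := by ring
    _ = _ := by rw [hx, hy]; ring

theorem pow_mul_sum_mul_pow_mul_sum [CommSemiring R] (x y : R) (k n : ℕ) (f g : ℕ → R) :
    (x ^ k * ∑ s ∈ range n, f s) * (y ^ k * ∑ t ∈ range n, g t) =
      ∑ s ∈ range n, ∑ t ∈ range n, f s * g t * (x * y) ^ k := by
  rw [mul_mul_mul_comm, ← mul_pow, sum_mul_sum, mul_comm, sum_mul]
  exact sum_congr rfl fun s _ => by rw [sum_mul]

theorem one_sub_mul_sum_gram [CommRing R] (m : ℕ) (a b : ℕ → R) (x y : R) :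
    (1 - x * y) * ∑ k ∈ range (m + 1),
      ((x ^ k * ∑ s ∈ range (m + 1 - k), a s * x ^ s) *
          (y ^ k * ∑ t ∈ range (m + 1 - k), b t * y ^ t) -
        (x ^ k * ∑ s ∈ range (m - k), b (m - s) * x ^ (s + 1)) *
          (y ^ k * ∑ t ∈ range (m - k), a (m - t) * y ^ (t + 1))) =
    (∑ s ∈ range (m + 1), a s * x ^ s) * (∑ t ∈ range (m + 1), b t * y ^ t) -
      x * y * ((∑ s ∈ range (m + 1), b (m - s) * x ^ s) *
        (∑ t ∈ range (m + 1), a (m - t) * y ^ t)) := by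
  simp only [pow_mul_sum_mul_pow_mul_sum, sum_sub_distrib, mul_sub]
  rw [one_sub_mul_sum_range_sum_range_sub le_rfl le_rfl,
    one_sub_mul_sum_range_sum_range_sub (m.le_add_right 1) (m.le_add_right 1)]
  simp only [mul_one_sub, sum_sub_distrib, sum_sum_mul_pow_sub_max_eq_reflect]
  rw [sub_sub_sub_cancel_right, sum_mul_sum, sum_mul_sum, mul_sum]
  congr 1
  exact sum_congr rfl fun s _ => by rw [mul_sum]; exact sum_congr rfl fun t _ => by ring

end GeometricTelescoping

section Toeplitz

variable {R : Type*}

theorem sum_range_ite_le [AddCommMonoid R] (n k : ℕ) (f : ℕ → R) :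
    ∑ i ∈ range n, (if k ≤ i then f i else 0) = ∑ s ∈ range (n - k), f (k + s) := by
  rw [← sum_filter, ← sum_Ico_eq_sum_range]
  congr 1
  ext i
  simp only [mem_filter, mem_range, mem_Ico]
  omega

def lowerToeplitz [Zero R] (m : ℕ) (q : ℕ → R) : Matrix (Fin (m + 1)) (Fin (m + 1)) R :=
  of fun i j => if (j : ℕ) ≤ i then q (i - j) else 0

/-- First row `0, q m, q (m - 1), …, q 1`. -/
def strictUpperToeplitz [Zero R] (m : ℕ) (q : ℕ → R) : Matrix (Fin (m + 1)) (Fin (m + 1)) R :=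
  of fun i j => if (i : ℕ) + 1 ≤ j then q (m + 1 + i - j) else 0

variable [CommSemiring R]

theorem powers_vecMul_lowerToeplitz (m : ℕ) (q : ℕ → R) (x : R) (k : Fin (m + 1)) :
    ((fun i : Fin (m + 1) => x ^ (i : ℕ)) ᵥ* lowerToeplitz m q) k =
      x ^ (k : ℕ) * ∑ s ∈ range (m + 1 - k), q s * x ^ s := by
  simp only [vecMul, dotProduct, lowerToeplitz, of_apply, mul_ite, mul_zero]
  rw [Fin.sum_univ_eq_sum_range (fun i => if (k : ℕ) ≤ i then x ^ i * q (i - k) else 0),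
    sum_range_ite_le, mul_sum]
  exact sum_congr rfl fun s _ => by rw [Nat.add_sub_cancel_left, pow_add]; ring

theorem strictUpperToeplitz_mulVec_powers (m : ℕ) (q : ℕ → R) (x : R) (k : Fin (m + 1)) :
    (strictUpperToeplitz m q *ᵥ fun j : Fin (m + 1) => x ^ (j : ℕ)) k =
      x ^ (k : ℕ) * ∑ s ∈ range (m - k), q (m - s) * x ^ (s + 1) := by
  simp only [mulVec, dotProduct, strictUpperToeplitz, of_apply, ite_mul, zero_mul]
  rw [Fin.sum_univ_eq_sum_range
      (fun j => if (k : ℕ) + 1 ≤ j then q (m + 1 + k - j) * x ^ j else 0),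
    sum_range_ite_le, mul_sum, show m + 1 - (k + 1) = m - k by omega]
  refine sum_congr rfl fun s _ => ?_
  rw [show m + 1 + k - (k + 1 + s) = m - s by omega]
  ring

end Toeplitz

/-- **Fejér–Riesz paper, equation (4.17) (Gohberg–Semencul-type identity).**
Let `p₀, …, p_m ∈ ℂ`, `p(w) = ∑ p_l w^l` and `←p(w) = ∑ conj(p_{m-l}) w^l`.
With `A` the lower-triangular Toeplitz matrix `A_{ij} = p_{i-j}` (for `i ≥ j`) and `B` the
strictly upper-triangular Toeplitz matrix `B_{ij} = p_{m+1+i-j}` (for `j ≥ i+1`), we have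
for all `w, η ∈ ℂ`:
`p(w)·conj(p(η)) − w·conj(η)·←p(w)·conj(←p(η))
  = (1 − w·conj(η)) · u(w)ᵀ (A Aᴴ − Bᴴ B) v(η)`,
where `u(w) = (1, w, …, w^m)ᵀ` and `v(η) = (1, conj η, …, (conj η)^m)ᵀ`. -/
theorem fejer_riesz_eq_4_17 (m : ℕ) (p : ℕ → ℂ) (w η : ℂ) :
    (∑ l ∈ Finset.range (m + 1), p l * w ^ l) *
        (starRingEnd ℂ) (∑ l ∈ Finset.range (m + 1), p l * η ^ l) -
      w * (starRingEnd ℂ) η *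
        (∑ l ∈ Finset.range (m + 1), (starRingEnd ℂ) (p (m - l)) * w ^ l) *
        (starRingEnd ℂ) (∑ l ∈ Finset.range (m + 1), (starRingEnd ℂ) (p (m - l)) * η ^ l) =
    (1 - w * (starRingEnd ℂ) η) *
      dotProduct (fun i : Fin (m + 1) => w ^ (i : ℕ))
        (Matrix.mulVec
          ((Matrix.of fun i j : Fin (m + 1) =>
              if (j : ℕ) ≤ (i : ℕ) then p ((i : ℕ) - (j : ℕ)) else 0) *
            (Matrix.of fun i j : Fin (m + 1) =>
              if (j : ℕ) ≤ (i : ℕ) then p ((i : ℕ) - (j : ℕ)) else 0)ᴴ -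
           (Matrix.of fun i j : Fin (m + 1) =>
              if (i : ℕ) + 1 ≤ (j : ℕ) then p (m + 1 + (i : ℕ) - (j : ℕ)) else 0)ᴴ *
            (Matrix.of fun i j : Fin (m + 1) =>
              if (i : ℕ) + 1 ≤ (j : ℕ) then p (m + 1 + (i : ℕ) - (j : ℕ)) else 0))
          (fun j : Fin (m + 1) => ((starRingEnd ℂ) η) ^ (j : ℕ))) := by
  show _ = (1 - w * conj η) * ((fun i : Fin (m + 1) => w ^ (i : ℕ)) ⬝ᵥ
    ((lowerToeplitz m p * (lowerToeplitz m p)ᴴ -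
        (strictUpperToeplitz m p)ᴴ * strictUpperToeplitz m p) *ᵥ
      fun j : Fin (m + 1) => conj η ^ (j : ℕ)))
  rw [sub_mulVec, dotProduct_sub, ← mulVec_mulVec, ← mulVec_mulVec,
    dotProduct_mulVec _ (lowerToeplitz m p), dotProduct_mulVec _ (strictUpperToeplitz m p)ᴴ,
    mulVec_conjTranspose, vecMul_conjTranspose]
  have hη : star (fun j : Fin (m + 1) => conj η ^ (j : ℕ)) =
      fun j : Fin (m + 1) => η ^ (j : ℕ) := by
    ext j; simp
  have hw : star (fun j : Fin (m + 1) => w ^ (j : ℕ)) =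
      fun j : Fin (m + 1) => conj w ^ (j : ℕ) := by
    ext j; simp
  rw [hη, hw]
  simp only [dotProduct, Pi.star_apply, powers_vecMul_lowerToeplitz,
    strictUpperToeplitz_mulVec_powers, Complex.star_def, map_sum, map_mul, map_pow,
    Complex.conj_conj, ← sum_sub_distrib]
  rw [mul_assoc (w * conj η), ← one_sub_mul_sum_gram, sum_range]
end

section
/- Let p ∈ ℂ[z,w] be a polynomial of degree at most m in w with p(z,w) ≠ 0 whenever |z| = 1 and |w| ≤ 1. Then for every θ ∈ [−π,π]: (a) for every integer l ≥ 1, (1/2π)·∫_{−π}^{π} e^{ilφ}·conj(p(e^{iθ}, e^{iφ})) / |p(e^{iθ}, e^{iφ})|² dφ = 0; and (b) for every integer l with 0 ≤ l ≤ m−1, (1/2π)·∫_{−π}^{π} e^{ilφ}·conj(r_θ(e^{iφ})) / |p(e^{iθ}, e^{iφ})|² dφ = 0, where r_θ(w) = wᵐ·conj(p(e^{iθ}, 1/conj(w))) is the reverse in w of the one-variable polynomial w ↦ p(e^{iθ}, w). -/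
open MvPolynomial

/-!
On the unit circle `conj P / |P|² = 1 / P`, and `conj (r_θ (e^{iφ})) = e^{-imφ} p(e^{iθ}, e^{iφ})`.
Hence both integrands are, up to conjugation, `e^{ikφ} / p(e^{iθ}, e^{iφ})` with `k ≥ 1`: this is
`w ↦ w^{k-1} / p(e^{iθ}, w)` integrated over the unit circle, which vanishes by Cauchy's theorem
because `p(e^{iθ}, ·)` has no zeros on the closed unit disc.
-/

open Complex ComplexConjugate Metric
open scoped Real

theorem integral_exp_mul_I_mul_comp_eq_zero {f : ℂ → ℂ} (hf : DiffContOnCl ℂ f (ball 0 1)) :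
    ∫ φ : ℝ in (-π)..π, exp (φ * I) * f (exp (φ * I)) = 0 := by
  have hcirc := hf.circleIntegral_eq_zero zero_le_one
  simp only [circleIntegral, deriv_circleMap, circleMap_zero, ofReal_one, one_mul, smul_eq_mul,
    mul_right_comm _ I, intervalIntegral.integral_mul_const, mul_eq_zero, I_ne_zero,
    or_false] at hcirc
  have hper : Function.Periodic (fun φ : ℝ => exp (φ * I) * f (exp (φ * I))) (2 * π) := by
    intro φ
    simp only [ofReal_add, add_mul, exp_add, ofReal_mul, ofReal_ofNat, exp_two_pi_mul_I,
      mul_one]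
  have hshift := hper.intervalIntegral_add_eq (-π) 0
  rwa [show -π + 2 * π = π by ring, zero_add, hcirc] at hshift

theorem integral_exp_mul_I_pow_div_comp_eq_zero {F : ℂ → ℂ} (hF : DiffContOnCl ℂ F (ball 0 1))
    (hF₀ : ∀ w ∈ closedBall (0 : ℂ) 1, F w ≠ 0) {k : ℕ} (hk : 0 < k) :
    ∫ φ : ℝ in (-π)..π, exp (φ * I) ^ k / F (exp (φ * I)) = 0 := by
  obtain ⟨n, rfl⟩ := Nat.exists_eq_add_one_of_ne_zero hk.ne'
  have hg : DiffContOnCl ℂ (fun w => w ^ n * (F w)⁻¹) (ball 0 1) :=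
    (differentiable_pow n).diffContOnCl.smul (hF.inv (by rwa [closure_ball _ one_ne_zero]))
  convert integral_exp_mul_I_mul_comp_eq_zero hg using 3 with φ
  ring

theorem Complex.conj_div_sq_norm (z : ℂ) : conj z / (‖z‖ : ℂ) ^ 2 = z⁻¹ := by
  rw [RCLike.inv_def z, div_eq_mul_inv]
  push_cast
  rfl

theorem Complex.pow_mul_conj_pow_mul_conj_div_sq_norm {u : ℂ} (hu : ‖u‖ = 1) {l m : ℕ}
    (hlm : l ≤ m) (z : ℂ) :
    u ^ l * conj (u ^ m * conj z) / (‖z‖ : ℂ) ^ 2 = conj (u ^ (m - l) / z) := by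
  have hu₀ : u ≠ 0 := norm_ne_zero_iff.mp (hu ▸ one_ne_zero)
  have hz : z / (‖z‖ : ℂ) ^ 2 = (conj z)⁻¹ := by simpa using conj_div_sq_norm (conj z)
  obtain ⟨k, rfl⟩ := Nat.exists_eq_add_of_le hlm
  rw [map_mul, conj_conj, mul_div_assoc, mul_div_assoc, hz, map_div₀, map_pow, map_pow,
    Nat.add_sub_cancel_left, ← inv_eq_conj hu, pow_add, ← mul_assoc, ← mul_assoc, ← mul_pow,
    mul_inv_cancel₀ hu₀, one_pow, one_mul, div_eq_mul_inv]

theorem fejer_riesz_lemma_4_1_general (m : ℕ) (p : MvPolynomial (Fin 2) ℂ)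
    (hp : ∀ z w : ℂ, Norm.norm z = 1 → Norm.norm w ≤ 1 → eval ![z, w] p ≠ 0)
    (θ : ℝ) :
    (∀ l : ℤ, 1 ≤ l →
      (1 / (2 * (Real.pi : ℂ))) *
        ∫ φ : ℝ in (-Real.pi)..Real.pi,
          Complex.exp ((l : ℂ) * (φ : ℂ) * Complex.I) *
            (starRingEnd ℂ)
              (eval ![Complex.exp ((θ : ℂ) * Complex.I),
                      Complex.exp ((φ : ℂ) * Complex.I)] p) /
            ((Norm.norm
              (eval ![Complex.exp ((θ : ℂ) * Complex.I),
                      Complex.exp ((φ : ℂ) * Complex.I)] p) : ℂ)) ^ 2 = 0) ∧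
    (∀ l : ℕ, l < m →
      (1 / (2 * (Real.pi : ℂ))) *
        ∫ φ : ℝ in (-Real.pi)..Real.pi,
          Complex.exp ((l : ℂ) * (φ : ℂ) * Complex.I) *
            (starRingEnd ℂ)
              ((Complex.exp ((φ : ℂ) * Complex.I)) ^ m *
                (starRingEnd ℂ)
                  (eval ![Complex.exp ((θ : ℂ) * Complex.I),
                          1 / (starRingEnd ℂ) (Complex.exp ((φ : ℂ) * Complex.I))] p)) /
            ((Norm.norm
              (eval ![Complex.exp ((θ : ℂ) * Complex.I),
                      Complex.exp ((φ : ℂ) * Complex.I)] p) : ℂ)) ^ 2 = 0) := by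
  set z₀ := exp (θ * I)
  have hF : Differentiable ℂ fun w => eval ![z₀, w] p := fun w => by
    simp_rw [← coe_aeval_eq_eval]
    refine (AnalyticAt.aeval_mvPolynomial (Fin.forall_fin_two.mpr ?_) p).differentiableAt
    exact ⟨analyticAt_const, analyticAt_id⟩
  have hF₀ : ∀ w ∈ closedBall (0 : ℂ) 1, eval ![z₀, w] p ≠ 0 := fun w hw =>
    hp z₀ w (norm_exp_ofReal_mul_I θ) (mem_closedBall_zero_iff.mp hw)
  have hkey {k : ℕ} (hk : 0 < k) := integral_exp_mul_I_pow_div_comp_eq_zero hF.diffContOnCl hF₀ hk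
  refine ⟨fun l hl => ?_, fun l hl => ?_⟩
  · lift l to ℕ using by omega
    refine mul_eq_zero_of_right _ ((intervalIntegral.integral_congr fun φ _ => ?_).trans
      (hkey (k := l) (by omega)))
    push_cast
    rw [mul_div_assoc, conj_div_sq_norm, mul_assoc, exp_nat_mul, div_eq_mul_inv]
  · refine mul_eq_zero_of_right _ ((intervalIntegral.integral_congr fun φ _ => ?_).trans
      (by rw [intervalIntegral.intervalIntegral_conj, hkey (Nat.sub_pos_of_lt hl), map_zero]))
    have hu := norm_exp_ofReal_mul_I φ
    rw [one_div, ← inv_eq_conj hu, inv_inv, mul_assoc, exp_nat_mul,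
      pow_mul_conj_pow_mul_conj_div_sq_norm hu hl.le]

/-- **Fejér–Riesz paper, Lemma 4.1.**
Let `p ∈ ℂ[z,w]` have degree at most `m` in `w` and satisfy `p(z,w) ≠ 0` whenever `|z| = 1`
and `|w| ≤ 1`. Then for every `θ ∈ [-π, π]`:
(a) for every integer `l ≥ 1`,
`(1/2π)·∫_{-π}^{π} e^{ilφ}·conj(p(e^{iθ}, e^{iφ})) / |p(e^{iθ}, e^{iφ})|² dφ = 0`;
(b) for every `0 ≤ l ≤ m - 1`,
`(1/2π)·∫_{-π}^{π} e^{ilφ}·conj(r_θ(e^{iφ})) / |p(e^{iθ}, e^{iφ})|² dφ = 0`,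
where `r_θ(w) = wᵐ·conj(p(e^{iθ}, 1/conj w))` is the reverse in `w` of `w ↦ p(e^{iθ}, w)`. -/
theorem fejer_riesz_lemma_4_1 (m : ℕ) (p : MvPolynomial (Fin 2) ℂ)
    (hdeg : ∀ d ∈ p.support, d 1 ≤ m)
    (hp : ∀ z w : ℂ, Norm.norm z = 1 → Norm.norm w ≤ 1 → eval ![z, w] p ≠ 0)
    (θ : ℝ) (hθ : θ ∈ Set.Icc (-Real.pi) Real.pi) :
    (∀ l : ℤ, 1 ≤ l →
      (1 / (2 * (Real.pi : ℂ))) *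
        ∫ φ : ℝ in (-Real.pi)..Real.pi,
          Complex.exp ((l : ℂ) * (φ : ℂ) * Complex.I) *
            (starRingEnd ℂ)
              (eval ![Complex.exp ((θ : ℂ) * Complex.I),
                      Complex.exp ((φ : ℂ) * Complex.I)] p) /
            ((Norm.norm
              (eval ![Complex.exp ((θ : ℂ) * Complex.I),
                      Complex.exp ((φ : ℂ) * Complex.I)] p) : ℂ)) ^ 2 = 0) ∧
    (∀ l : ℕ, l < m →
      (1 / (2 * (Real.pi : ℂ))) *
        ∫ φ : ℝ in (-Real.pi)..Real.pi,
          Complex.exp ((l : ℂ) * (φ : ℂ) * Complex.I) *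
            (starRingEnd ℂ)
              ((Complex.exp ((φ : ℂ) * Complex.I)) ^ m *
                (starRingEnd ℂ)
                  (eval ![Complex.exp ((θ : ℂ) * Complex.I),
                          1 / (starRingEnd ℂ) (Complex.exp ((φ : ℂ) * Complex.I))] p)) /
            ((Norm.norm
              (eval ![Complex.exp ((θ : ℂ) * Complex.I),
                      Complex.exp ((φ : ℂ) * Complex.I)] p) : ℂ)) ^ 2 = 0) :=
  fejer_riesz_lemma_4_1_general m p hp θ
end

section
/- Let p ∈ ℂ[z,w] be a polynomial of degree at most (n,m) with p(z,w) ≠ 0 whenever |z| ≤ 1 and |w| ≤ 1. Then for every integer k ∈ ℤ and every integer l ≥ 1: (1/4π²)·∫∫_{[−π,π]²} p(e^{iθ}, e^{iφ})·e^{−ikθ}·e^{−ilφ} / |p(e^{iθ}, e^{iφ})|² dθ dφ = 0. -/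
/-!
Since `P / |P|² = 1 / conj P`, for fixed `θ` the inner integrand is `e^{-ikθ}` times the complex
conjugate of `e^{ilφ} / p(e^{iθ}, e^{iφ})`. As `|e^{iθ}| = 1`, the function `w ↦ 1 / p(e^{iθ}, w)`
is holomorphic on a neighbourhood of the closed unit disc, so its Fourier coefficients of negative
index vanish by Cauchy's theorem: `∫ e^{ilφ} f(e^{iφ}) dφ = -i ∮ w^{l-1} f(w) dw = 0` for `l ≥ 1`.
Hence every inner integral is already zero.
-/

open MvPolynomial Complex ComplexConjugate Metric

theorem periodic_exp_ofReal_mul_I :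
    Function.Periodic (fun φ : ℝ => exp (φ * I)) (2 * Real.pi) := by
  intro φ
  simp only [ofReal_add, ofReal_mul, ofReal_ofNat, add_mul, exp_add, exp_two_pi_mul_I, mul_one]

theorem conj_exp_ofReal_mul_I (x : ℝ) : conj (exp (x * I)) = exp (-x * I) := by
  rw [← exp_conj, map_mul, conj_ofReal, conj_I, mul_neg, neg_mul]

theorem mul_div_norm_sq_eq_div_conj (z a : ℂ) : z * a / (‖z‖ : ℂ) ^ 2 = a / conj z := by
  rcases eq_or_ne z 0 with rfl | hz
  · simp
  · rw [← mul_conj', mul_div_mul_left _ _ hz]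

theorem circleIntegral_unitCircle_pow_mul (f : ℂ → ℂ) (n : ℕ) :
    (∮ w in C(0, 1), w ^ n * f w) =
      I * ∫ φ in (0 : ℝ)..2 * Real.pi, exp ((n + 1 : ℕ) * φ * I) * f (exp (φ * I)) := by
  rw [← intervalIntegral.integral_const_mul]
  refine intervalIntegral.integral_congr fun φ _ => ?_
  simp only [deriv_circleMap, circleMap_zero, ofReal_one, one_mul, smul_eq_mul, Nat.cast_succ]
  rw [add_mul, add_mul, one_mul, exp_add, ← exp_nat_mul]
  ring_nf

theorem integral_exp_mul_comp_exp_eq_zero {f : ℂ → ℂ} (hf : DiffContOnCl ℂ f (ball 0 1))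
    {l : ℤ} (hl : 0 < l) :
    ∫ φ in (-Real.pi)..Real.pi, exp (l * φ * I) * f (exp (φ * I)) = 0 := by
  obtain ⟨n, rfl⟩ : ∃ n : ℕ, l = (n + 1 : ℕ) := ⟨(l - 1).toNat, by omega⟩
  have hper : Function.Periodic
      (fun φ : ℝ => exp (((n + 1 : ℕ) : ℤ) * φ * I) * f (exp (φ * I))) (2 * Real.pi) := by
    simp only [mul_assoc, exp_int_mul]
    exact periodic_exp_ofReal_mul_I.comp fun w => w ^ ((n + 1 : ℕ) : ℤ) * f w
  have hcauchy := ((differentiable_pow n).diffContOnCl.smul hf).circleIntegral_eq_zero zero_le_one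
  simp only [smul_eq_mul, circleIntegral_unitCircle_pow_mul, mul_eq_zero, I_ne_zero,
    false_or] at hcauchy
  have hshift := hper.intervalIntegral_add_eq (-Real.pi) 0
  rw [show -Real.pi + 2 * Real.pi = Real.pi by ring, zero_add] at hshift
  rw [hshift]
  exact_mod_cast hcauchy

theorem integral_mul_exp_neg_div_norm_sq_eq_zero {g : ℂ → ℂ} (hg : DiffContOnCl ℂ g (ball 0 1))
    (hg₀ : ∀ w ∈ closedBall (0 : ℂ) 1, g w ≠ 0) {l : ℤ} (hl : 0 < l) :
    ∫ φ in (-Real.pi)..Real.pi,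
      g (exp (φ * I)) * exp (-l * φ * I) / (‖g (exp (φ * I))‖ : ℂ) ^ 2 = 0 := by
  have hconj : ∀ φ : ℝ, g (exp (φ * I)) * exp (-l * φ * I) / (‖g (exp (φ * I))‖ : ℂ) ^ 2 =
      conj (exp (l * φ * I) * (g (exp (φ * I)))⁻¹) := by
    intro φ
    rw [mul_div_norm_sq_eq_div_conj, map_mul, map_inv₀, ← div_eq_mul_inv]
    congr 1
    simpa [mul_assoc] using (conj_exp_ofReal_mul_I (l * φ)).symm
  have hinv : DiffContOnCl ℂ g⁻¹ (ball 0 1) :=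
    hg.inv fun w hw => hg₀ w (closure_ball_subset_closedBall hw)
  have hfourier := integral_exp_mul_comp_exp_eq_zero hinv hl
  simp only [Pi.inv_apply] at hfourier
  simp_rw [hconj, intervalIntegral.intervalIntegral_conj, hfourier, map_zero]

theorem differentiable_eval_vecCons {𝕜 : Type*} [NontriviallyNormedField 𝕜]
    (p : MvPolynomial (Fin 2) 𝕜) (z : 𝕜) :
    Differentiable 𝕜 fun w : 𝕜 => eval ![z, w] p := by
  intro w
  have hcoord : ∀ i, AnalyticAt 𝕜 (fun w : 𝕜 => ![z, w] i) w := by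
    intro i
    fin_cases i
    · exact analyticAt_const
    · exact analyticAt_id
  simpa [coe_aeval_eq_eval] using (AnalyticAt.aeval_mvPolynomial hcoord p).differentiableAt

theorem fejer_riesz_eq_5_6a_general (p : MvPolynomial (Fin 2) ℂ)
    (hp : ∀ z w : ℂ, ‖z‖ ≤ 1 → ‖w‖ ≤ 1 → eval ![z, w] p ≠ 0)
    (k l : ℤ) (hl : 1 ≤ l) :
    (1 / (4 * (Real.pi : ℂ) ^ 2)) *
      ∫ θ : ℝ in (-Real.pi)..Real.pi, ∫ φ : ℝ in (-Real.pi)..Real.pi,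
        eval ![Complex.exp ((θ : ℂ) * Complex.I),
               Complex.exp ((φ : ℂ) * Complex.I)] p *
            Complex.exp (-(k : ℂ) * (θ : ℂ) * Complex.I) *
            Complex.exp (-(l : ℂ) * (φ : ℂ) * Complex.I) /
          (((‖eval ![Complex.exp ((θ : ℂ) * Complex.I),
                    Complex.exp ((φ : ℂ) * Complex.I)] p‖ : ℝ) : ℂ)) ^ 2 = 0 := by
  have hinner : ∀ θ : ℝ, ∫ φ : ℝ in (-Real.pi)..Real.pi,
      eval ![exp (θ * I), exp (φ * I)] p * exp (-l * φ * I) /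
        (‖eval ![exp (θ * I), exp (φ * I)] p‖ : ℂ) ^ 2 = 0 := fun θ =>
    integral_mul_exp_neg_div_norm_sq_eq_zero (differentiable_eval_vecCons p _).diffContOnCl
      (fun w hw => hp _ w (norm_exp_ofReal_mul_I θ).le (mem_closedBall_zero_iff.mp hw))
      (by omega)
  simp_rw [mul_right_comm _ (exp (-k * _ * I)), mul_div_right_comm _ (exp (-k * _ * I)),
    intervalIntegral.integral_mul_const, hinner, zero_mul, intervalIntegral.integral_zero,
    mul_zero]

/-- **Fejér–Riesz paper, Lemma 5.1, equation (5.6a).**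
Let `p ∈ ℂ[z,w]` be a polynomial of degree at most `(n,m)` which is stable (nonzero for
`|z| ≤ 1` and `|w| ≤ 1`). Then for every `k ∈ ℤ` and every integer `l ≥ 1`:
`(1/4π²)·∫∫_{[-π,π]²} p(e^{iθ},e^{iφ})·e^{-ikθ}·e^{-ilφ} / |p(e^{iθ},e^{iφ})|² dθ dφ = 0`. -/
theorem fejer_riesz_eq_5_6a (n m : ℕ) (p : MvPolynomial (Fin 2) ℂ)
    (hdeg : ∀ d ∈ p.support, d 0 ≤ n ∧ d 1 ≤ m)
    (hp : ∀ z w : ℂ, ‖z‖ ≤ 1 → ‖w‖ ≤ 1 → eval ![z, w] p ≠ 0)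
    (k l : ℤ) (hl : 1 ≤ l) :
    (1 / (4 * (Real.pi : ℂ) ^ 2)) *
      ∫ θ : ℝ in (-Real.pi)..Real.pi, ∫ φ : ℝ in (-Real.pi)..Real.pi,
        eval ![Complex.exp ((θ : ℂ) * Complex.I),
               Complex.exp ((φ : ℂ) * Complex.I)] p *
            Complex.exp (-(k : ℂ) * (θ : ℂ) * Complex.I) *
            Complex.exp (-(l : ℂ) * (φ : ℂ) * Complex.I) /
          (((‖eval ![Complex.exp ((θ : ℂ) * Complex.I),
                    Complex.exp ((φ : ℂ) * Complex.I)] p‖ : ℝ) : ℂ)) ^ 2 = 0 :=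
  fejer_riesz_eq_5_6a_general p hp k l hl
end

section
/- Let P, Q ∈ ℂ[z,w] be polynomials of degree at most (n,m) such that: P is not divisible by z and not divisible by w; Q is not divisible by z and not divisible by w; P(z,w) ≠ 0 whenever |z| = 1 and |w| ≤ 1; Q(z,w) ≠ 0 whenever |z| ≤ 1 and |w| = 1; and |P(z,w)| = |Q(z,w)| for all (z,w) with |z| = |w| = 1. Then there exist stable polynomials p, q ∈ ℂ[z,w], of degrees (n₁,m₁) and (n₂,m₂) respectively with n₁ + n₂ ≤ n and m₁ + m₂ ≤ m, such that P(z,w) = p(z,w)·z^{n₂}·q(1/z, w) (the second factor z^{n₂}·q(1/z,w) being the reverse of q in the variable z, a polynomial in z and w). -/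
/-!
On the torus `|P|² = |Q|²` reads `P·P̃ = Q·Q̃`, where `P̃(z,w) = z^n w^m · conj P(1/z̄, 1/w̄)`;
both sides are polynomials, so this is an identity. Grouping the prime factors of `P` according
to whether they divide `Q` writes `P = p·r` with `p ∣ Q^k` and `r ∣ Q̃^l`, and `q` is the reverse
of `r` in `z`. Stability of `Q` in `z` then shows that `p(·,1)` and, for a suitable `w₀` on the
circle, `q(·,w₀)` have no zeros in the closed disk, while neither vanishes for `|z| = 1`,
`|w| ≤ 1` because `P` does not. Stability follows by a Hurwitz-type argument: for `w` in the
closed disk, whether `f(·,w)` has a zero in the closed disk is locally constant in `w`, since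
zeros cannot cross the circle.
-/

open Metric Filter Topology Set

lemma infinite_sphere_zero_one : (sphere (0 : ℂ) 1).Infinite := by
  have hexp : (Circle.exp '' Icc 0 1).Infinite :=
    (Icc_infinite zero_lt_one).image (Circle.exp_injOn_Icc (by linarith [Real.pi_gt_three]))
  refine (hexp.image Circle.coe_injective.injOn).mono ?_
  rintro _ ⟨u, -, rfl⟩
  exact mem_sphere_zero_iff_norm.2 (Circle.norm_coe u)

lemma le_norm_center_of_le_norm_sphere {g : ℂ → ℂ} {c : ℂ} {r a : ℝ} (hr : 0 < r) (ha : 0 < a)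
    (hg : DifferentiableOn ℂ g (closedBall c r)) (hne : ∀ x ∈ closedBall c r, g x ≠ 0)
    (hbd : ∀ x ∈ sphere c r, a ≤ ‖g x‖) : a ≤ ‖g c‖ := by
  have hinv : DiffContOnCl ℂ (fun x => (g x)⁻¹) (ball c r) := by
    refine DifferentiableOn.diffContOnCl ?_
    rw [closure_ball c hr.ne']
    exact hg.inv hne
  have hmax := Complex.norm_le_of_forall_mem_frontier_norm_le isBounded_ball hinv
    (C := a⁻¹) (fun x hx => ?_) (subset_closure (mem_ball_self hr))
  · rw [norm_inv] at hmax
    exact (inv_le_inv₀ (norm_pos_iff.2 (hne c (mem_closedBall_self hr.le))) ha).1 hmax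
  · rw [frontier_ball c hr.ne'] at hx
    rw [norm_inv]
    exact inv_anti₀ ha (hbd x hx)

section Hurwitz

variable {W : Type*} [TopologicalSpace W]

lemma eventually_exists_zero_of_isolated_zero {f : ℂ → W → ℂ}
    (hc : Continuous (Function.uncurry f)) (hd : ∀ w, Differentiable ℂ (f · w))
    {z₀ : ℂ} {w₀ : W} (hz₀ : f z₀ w₀ = 0) (hiso : ∀ᶠ z in 𝓝[≠] z₀, f z w₀ ≠ 0)
    {U : Set ℂ} (hU : U ∈ 𝓝 z₀) : ∀ᶠ w in 𝓝 w₀, ∃ z ∈ U, f z w = 0 := by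
  obtain ⟨r, hr, hrU⟩ := Metric.mem_nhds_iff.1 (inter_mem hU (eventually_nhdsWithin_iff.1 hiso))
  have hr₂ : 0 < r / 2 := half_pos hr
  have hball : closedBall z₀ (r / 2) ⊆ ball z₀ r := closedBall_subset_ball (half_lt_self hr)
  have hsphere : ∀ x ∈ sphere z₀ (r / 2), f x w₀ ≠ 0 := fun x hx =>
    (hrU (hball (sphere_subset_closedBall hx))).2 (ne_of_mem_sphere hx hr₂.ne')
  obtain ⟨x₀, hx₀, hmin⟩ := (isCompact_sphere z₀ (r / 2)).exists_isMinOn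
    (NormedSpace.sphere_nonempty.2 hr₂.le) (hd w₀).continuous.norm.continuousOn
  set δ := ‖f x₀ w₀‖
  have hδ : 0 < δ := norm_pos_iff.2 (hsphere x₀ hx₀)
  have hfar : ∀ᶠ w in 𝓝 w₀, ∀ x ∈ sphere z₀ (r / 2), δ / 2 < ‖f x w‖ := by
    refine (isCompact_sphere z₀ (r / 2)).eventually_forall_of_forall_eventually fun x hx => ?_
    refine continuousAt_const.eventually_lt (hc.comp continuous_swap).norm.continuousAt ?_
    exact (half_lt_self hδ).trans_le (hmin hx)
  have hnear : ∀ᶠ w in 𝓝 w₀, ‖f z₀ w‖ < δ / 2 := by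
    refine (hc.comp (continuous_const.prodMk continuous_id)).norm.continuousAt.eventually_lt
      continuousAt_const ?_
    simpa [hz₀] using half_pos hδ
  filter_upwards [hfar, hnear] with w hwfar hwnear
  -- otherwise the minimum modulus principle would give `δ / 2 ≤ ‖f z₀ w‖`
  by_contra! hne
  exact hwnear.not_ge <| le_norm_center_of_le_norm_sphere hr₂ (half_pos hδ)
    (hd w).differentiableOn (fun x hx => hne x (hrU (hball hx)).1) fun x hx => (hwfar x hx).le

theorem ne_zero_of_ne_zero_on_circle_of_isPreconnected {f : ℂ → W → ℂ}
    (hc : Continuous (Function.uncurry f)) (hd : ∀ w, Differentiable ℂ (f · w))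
    {S : Set W} (hS : IsPreconnected S) (hcirc : ∀ z, ∀ w ∈ S, ‖z‖ = 1 → f z w ≠ 0)
    {w₀ : W} (hw₀ : w₀ ∈ S) (hdisk : ∀ z, ‖z‖ ≤ 1 → f z w₀ ≠ 0) :
    ∀ z, ∀ w ∈ S, ‖z‖ ≤ 1 → f z w ≠ 0 := by
  let HasZero (w : W) : Prop := ∃ z ∈ closedBall (0 : ℂ) 1, f z w = 0
  have hlocal : ∀ w₁ ∈ S, ∀ᶠ w in 𝓝[S] w₁, HasZero w₁ ↔ HasZero w := by
    intro w₁ hw₁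
    refine eventually_nhdsWithin_of_eventually_nhds ?_
    by_cases h : HasZero w₁
    · obtain ⟨z₁, hz₁, hfz₁⟩ := h
      have hz₁_lt : ‖z₁‖ < 1 := (mem_closedBall_zero_iff.1 hz₁).lt_of_ne
        fun h => hcirc z₁ w₁ hw₁ h hfz₁
      -- the slice `f · w₁` is entire and nonzero at `1`, so its zeros are isolated
      have hiso : ∀ᶠ z in 𝓝[≠] z₁, f z w₁ ≠ 0 := by
        refine ((hd w₁).analyticAt z₁).eventually_eq_zero_or_eventually_ne_zero.resolve_left
          fun hzero => hcirc 1 w₁ hw₁ norm_one ?_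
        exact AnalyticOnNhd.eqOn_zero_of_preconnected_of_eventuallyEq_zero
          (fun z _ => (hd w₁).analyticAt z) isPreconnected_univ (mem_univ z₁) hzero (mem_univ 1)
      filter_upwards [eventually_exists_zero_of_isolated_zero hc hd hfz₁ hiso
        (isOpen_ball.mem_nhds (mem_ball_zero_iff.2 hz₁_lt))] with w ⟨z, hz, hfz⟩
      exact iff_of_true ⟨z₁, hz₁, hfz₁⟩ ⟨z, ball_subset_closedBall hz, hfz⟩
    · have hfree : ∀ z ∈ closedBall (0 : ℂ) 1, f z w₁ ≠ 0 := fun z hz hfz => h ⟨z, hz, hfz⟩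
      filter_upwards [(isCompact_closedBall (0 : ℂ) 1).eventually_forall_of_forall_eventually
        (P := fun w z => f z w ≠ 0) fun z hz =>
          ((hc.comp continuous_swap).continuousAt (x := (w₁, z))).eventually_ne (hfree z hz)]
        with w hw
      exact iff_of_false h fun ⟨z, hz, hfz⟩ => hw z hz hfz
  intro z w hw hz hfz
  obtain ⟨z', hz', hfz'⟩ := (hS.induction₂ (fun a b => HasZero a ↔ HasZero b) hlocal
    (fun _ _ _ _ _ _ => Iff.trans) (fun _ _ _ _ => Iff.symm) hw hw₀).1
    ⟨z, mem_closedBall_zero_iff.2 hz, hfz⟩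
  exact hdisk z' (mem_closedBall_zero_iff.1 hz') hfz'

end Hurwitz

open UniqueFactorizationMonoid in
theorem exists_mul_eq_dvd_pow_of_dvd_mul {α : Type*} [CommMonoidWithZero α]
    [UniqueFactorizationMonoid α] {a b c : α} (ha : a ≠ 0) (h : a ∣ b * c) :
    ∃ a₁ a₂ : α, a = a₁ * a₂ ∧ (∃ k : ℕ, a₁ ∣ b ^ k) ∧ ∃ k : ℕ, a₂ ∣ c ^ k := by
  classical
  obtain ⟨u, hu⟩ := factors_prod ha
  have hdvd_pow {s : Multiset α} {x : α} (hs : ∀ π ∈ s, π ∣ x) :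
      s.prod ∣ x ^ Multiset.card s := by
    simpa using Multiset.prod_dvd_prod_of_dvd id (fun _ => x) hs
  refine ⟨((factors a).filter (· ∣ b)).prod * u, ((factors a).filter (¬ · ∣ b)).prod, ?_,
    ⟨_, Units.mul_right_dvd.2 (hdvd_pow fun π hπ => (Multiset.mem_filter.1 hπ).2)⟩,
    _, hdvd_pow fun π hπ => ?_⟩
  · rw [mul_right_comm, ← Multiset.prod_add, Multiset.filter_add_not, hu]
  · obtain ⟨hπa, hπb⟩ := Multiset.mem_filter.1 hπ
    exact ((prime_of_factor π hπa).dvd_or_dvd ((dvd_of_mem_factors hπa).trans h)).resolve_left hπb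

lemma map_eq_zero_of_dvd_pow {A B : Type*} [CommSemiring A] [CommSemiring B] [IsReduced B]
    (φ : A →+* B) {a b : A} {k : ℕ} (h : a ∣ b ^ k) (ha : φ a = 0) : φ b = 0 :=
  eq_zero_of_pow_eq_zero <| by rw [← map_pow]; exact zero_dvd_iff.1 (ha ▸ map_dvd φ h)

namespace MvPolynomial

section Reflect

variable {σ R K : Type*} [CommSemiring R] [Field K]

noncomputable def reflect (N : σ →₀ ℕ) (f : MvPolynomial σ R) : MvPolynomial σ R :=
  ∑ d ∈ f.support, monomial (N - d) (coeff d f)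

lemma eval_reflect [Fintype σ] {N : σ →₀ ℕ} {f : MvPolynomial σ K}
    (hf : ∀ d ∈ f.support, d ≤ N) {x : σ → K} (hx : ∀ i, x i ≠ 0) :
    eval x (reflect N f) = (∏ i, x i ^ N i) * eval (fun i => (x i)⁻¹) f := by
  rw [reflect, map_sum, eval_eq', Finset.mul_sum]
  refine Finset.sum_congr rfl fun d hd => ?_
  rw [eval_monomial, Finsupp.prod_fintype _ _ fun i => pow_zero _, mul_left_comm,
    ← Finset.prod_mul_distrib]
  congr 2 with i
  rw [Finsupp.tsub_apply, inv_pow, pow_sub₀ _ (hx i) (hf d hd i)]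

/-- `z^N · conj f(1/z̄)` in multi-index notation; on the torus it equals `z^N · conj f(z)`. -/
noncomputable def conjReflect (N : σ →₀ ℕ) (f : MvPolynomial σ ℂ) : MvPolynomial σ ℂ :=
  map (starRingEnd ℂ) (reflect N f)

lemma eval_conjReflect [Fintype σ] {N : σ →₀ ℕ} {f : MvPolynomial σ ℂ}
    (hf : ∀ d ∈ f.support, d ≤ N) {x : σ → ℂ} (hx : ∀ i, x i ≠ 0) :
    eval x (conjReflect N f) =
      (∏ i, x i ^ N i) * starRingEnd ℂ (eval (fun i => (starRingEnd ℂ (x i))⁻¹) f) := by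
  have hconj : eval x (conjReflect N f) =
      starRingEnd ℂ (eval (fun i => starRingEnd ℂ (x i)) (reflect N f)) := by
    rw [conjReflect, eval_map, eval, coe_eval₂Hom, eval₂_comp_left]
    simp [Function.comp_def]
  rw [hconj, eval_reflect hf (by simpa using hx), map_mul, map_prod]
  simp

theorem mul_conjReflect_eq [Fintype σ] {N : σ →₀ ℕ} {P Q : MvPolynomial σ ℂ}
    (hP : ∀ d ∈ P.support, d ≤ N) (hQ : ∀ d ∈ Q.support, d ≤ N)
    (habs : ∀ x : σ → ℂ, (∀ i, ‖x i‖ = 1) → ‖eval x P‖ = ‖eval x Q‖) :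
    P * conjReflect N P = Q * conjReflect N Q := by
  refine funext_set (fun _ => sphere (0 : ℂ) 1) (fun _ => infinite_sphere_zero_one) fun x hx => ?_
  have hx₁ : ∀ i, ‖x i‖ = 1 := fun i => mem_sphere_zero_iff_norm.1 (hx i trivial)
  have hx₀ : ∀ i, x i ≠ 0 := fun i => norm_ne_zero_iff.1 (by rw [hx₁ i]; exact one_ne_zero)
  have hinv : (fun i => (starRingEnd ℂ (x i))⁻¹) = x :=
    _root_.funext fun i => by rw [← Complex.inv_eq_conj (hx₁ i), inv_inv]
  rw [map_mul, map_mul, eval_conjReflect hP hx₀, eval_conjReflect hQ hx₀, hinv, mul_left_comm,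
    Complex.mul_conj, mul_left_comm (eval x Q), Complex.mul_conj, Complex.normSq_eq_norm_sq,
    Complex.normSq_eq_norm_sq, habs x hx₁]

end Reflect

section ReverseX0

variable {R K : Type*} [CommSemiring R] [Field K] {n : ℕ}

/-- `z^(deg_z f) · f(1/z, …)`, where `z = X 0`. -/
noncomputable def reverseX0 (f : MvPolynomial (Fin (n + 1)) R) : MvPolynomial (Fin (n + 1)) R :=
  (finSuccEquiv R n).symm (finSuccEquiv R n f).reverse

@[simp]
lemma finSuccEquiv_reverseX0 (f : MvPolynomial (Fin (n + 1)) R) :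
    finSuccEquiv R n (reverseX0 f) = (finSuccEquiv R n f).reverse := by
  simp [reverseX0]

lemma X_zero_dvd_iff {f : MvPolynomial (Fin (n + 1)) R} :
    X 0 ∣ f ↔ (finSuccEquiv R n f).coeff 0 = 0 := by
  rw [← Polynomial.X_dvd_iff, ← finSuccEquiv_X_zero, map_dvd_iff]

lemma degreeOf_zero_reverseX0 {f : MvPolynomial (Fin (n + 1)) R} (hf : ¬ X 0 ∣ f) :
    degreeOf 0 (reverseX0 f) = degreeOf 0 f := by
  rw [X_zero_dvd_iff] at hf
  rw [← natDegree_finSuccEquiv, ← natDegree_finSuccEquiv, finSuccEquiv_reverseX0,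
    Polynomial.reverse_natDegree, Polynomial.natTrailingDegree_eq_zero.2 (Or.inr hf),
    Nat.sub_zero]

lemma degreeOf_succ_le_of_forall_coeff_finSuccEquiv {f : MvPolynomial (Fin (n + 1)) R}
    {j : Fin n} {k : ℕ} (h : ∀ i, degreeOf j ((finSuccEquiv R n f).coeff i) ≤ k) :
    degreeOf j.succ f ≤ k := by
  refine degreeOf_le_iff.2 fun d hd => ?_
  rw [← Finsupp.cons_tail d, ← mem_support_coeff_finSuccEquiv] at hd
  rw [← Finsupp.cons_tail d, Finsupp.cons_succ]
  exact (monomial_le_degreeOf j hd).trans (h _)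

lemma degreeOf_succ_reverseX0_le (f : MvPolynomial (Fin (n + 1)) R) (j : Fin n) :
    degreeOf j.succ (reverseX0 f) ≤ degreeOf j.succ f :=
  degreeOf_succ_le_of_forall_coeff_finSuccEquiv fun i => by
    rw [finSuccEquiv_reverseX0, Polynomial.coeff_reverse]
    exact degreeOf_coeff_finSuccEquiv f j _

lemma degreeOf_add_degreeOf_reverseX0_le [NoZeroDivisors R] {p r : MvPolynomial (Fin (n + 1)) R}
    (hp : p ≠ 0) (hr : ¬ X 0 ∣ r) (i : Fin (n + 1)) :
    degreeOf i p + degreeOf i (reverseX0 r) ≤ degreeOf i (p * r) := by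
  rw [degreeOf_mul_eq hp (by rintro rfl; exact hr (dvd_zero _))]
  refine Fin.cases ?_ (fun j => ?_) i
  · rw [degreeOf_zero_reverseX0 hr]
  · gcongr
    exact degreeOf_succ_reverseX0_le r j

lemma eval_cons_reverseX0_mul_pow (f : MvPolynomial (Fin (n + 1)) K) {z : K} (hz : z ≠ 0)
    (s : Fin n → K) :
    eval (Fin.cons z⁻¹ s) (reverseX0 f) * z ^ degreeOf 0 f = eval (Fin.cons z s) f := by
  let := invertibleOfNonzero hz
  rw [eval_eq_eval_mv_eval', eval_eq_eval_mv_eval', Polynomial.eval_map, Polynomial.eval_map,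
    finSuccEquiv_reverseX0, ← natDegree_finSuccEquiv, ← invOf_eq_inv,
    Polynomial.eval₂_reverse_mul_pow]

lemma eval_cons_reverseX0_eq_zero_iff (f : MvPolynomial (Fin (n + 1)) K) {z : K} (hz : z ≠ 0)
    (s : Fin n → K) :
    eval (Fin.cons z s) (reverseX0 f) = 0 ↔ eval (Fin.cons z⁻¹ s) f = 0 := by
  rw [← eval_cons_reverseX0_mul_pow f (inv_ne_zero hz), inv_inv, mul_eq_zero,
    or_iff_left (pow_ne_zero _ (inv_ne_zero hz))]

lemma eval_cons_zero_reverseX0 (f : MvPolynomial (Fin (n + 1)) R) (s : Fin n → R) :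
    eval (Fin.cons 0 s) (reverseX0 f) = eval s (finSuccEquiv R n f).leadingCoeff := by
  rw [eval_eq_eval_mv_eval', ← Polynomial.coeff_zero_eq_eval_zero, Polynomial.coeff_map,
    finSuccEquiv_reverseX0, Polynomial.coeff_zero_reverse]

end ReverseX0

def IsStable (f : MvPolynomial (Fin 2) ℂ) : Prop :=
  ∀ z w : ℂ, ‖z‖ ≤ 1 → ‖w‖ ≤ 1 → eval ![z, w] f ≠ 0

theorem isStable_of_ne_zero_on_circle {f : MvPolynomial (Fin 2) ℂ}
    (hcirc : ∀ z w : ℂ, ‖z‖ = 1 → ‖w‖ ≤ 1 → eval ![z, w] f ≠ 0)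
    {w₀ : ℂ} (hw₀ : ‖w₀‖ ≤ 1) (hdisk : ∀ z : ℂ, ‖z‖ ≤ 1 → eval ![z, w₀] f ≠ 0) :
    f.IsStable := by
  have hc : Continuous (Function.uncurry fun z w : ℂ => eval ![z, w] f) :=
    (continuous_eval f).comp (by fun_prop)
  have hd (w : ℂ) : Differentiable ℂ fun z => eval ![z, w] f := by
    change Differentiable ℂ fun z => eval (Fin.cons z ![w]) f
    simp_rw [eval_eq_eval_mv_eval']
    exact Polynomial.differentiable _
  intro z w hz hw
  exact ne_zero_of_ne_zero_on_circle_of_isPreconnected hc hd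
    (convex_closedBall (0 : ℂ) 1).isPreconnected
    (fun z w hw hz => hcirc z w hz (mem_closedBall_zero_iff.1 hw))
    (mem_closedBall_zero_iff.2 hw₀) hdisk z w (mem_closedBall_zero_iff.2 hw) hz

lemma exists_norm_eq_one_eval_zero_reverseX0_ne_zero {r : MvPolynomial (Fin 2) ℂ} (hr : r ≠ 0) :
    ∃ w₀ : ℂ, ‖w₀‖ = 1 ∧ eval ![0, w₀] (reverseX0 r) ≠ 0 := by
  by_contra! h
  have hlc : (finSuccEquiv ℂ 1 r).leadingCoeff = 0 :=
    funext_set (fun _ => sphere (0 : ℂ) 1) (fun _ => infinite_sphere_zero_one) fun x hx => by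
      have hx' : x = ![x 0] := by ext i; fin_cases i; rfl
      rw [map_zero, ← eval_cons_zero_reverseX0, hx']
      exact h (x 0) (mem_sphere_zero_iff_norm.1 (hx 0 trivial))
  exact hr (by simpa using hlc)

lemma eval_eq_zero_of_eval_conjReflect_eq_zero {Q : MvPolynomial (Fin 2) ℂ} {N : Fin 2 →₀ ℕ}
    (hQ : ∀ d ∈ Q.support, d ≤ N) {z w : ℂ} (hz : z ≠ 0) (hw : ‖w‖ = 1)
    (h : eval ![z⁻¹, w] (conjReflect N Q) = 0) : eval ![starRingEnd ℂ z, w] Q = 0 := by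
  have hx : ∀ i, ![z⁻¹, w] i ≠ 0 :=
    Fin.forall_fin_two.2 ⟨inv_ne_zero hz, ne_zero_of_norm_ne_zero (hw.symm ▸ one_ne_zero)⟩
  have hinv : (fun i => (starRingEnd ℂ (![z⁻¹, w] i))⁻¹) = ![starRingEnd ℂ z, w] := by
    ext i; fin_cases i
    · simp
    · simp [← Complex.inv_eq_conj hw]
  rw [eval_conjReflect hQ hx, hinv, mul_eq_zero, map_eq_zero] at h
  exact h.resolve_left (Finset.prod_ne_zero_iff.2 fun i _ => pow_ne_zero _ (hx i))

theorem isStable_reverseX0 {r P Q : MvPolynomial (Fin 2) ℂ} {N : Fin 2 →₀ ℕ} {k : ℕ}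
    (hrP : r ∣ P) (hrQ : r ∣ conjReflect N Q ^ k) (hr : ¬ X 0 ∣ r)
    (hQ : ∀ d ∈ Q.support, d ≤ N)
    (hPstab : ∀ z w : ℂ, ‖z‖ = 1 → ‖w‖ ≤ 1 → eval ![z, w] P ≠ 0)
    (hQstab : ∀ z w : ℂ, ‖z‖ ≤ 1 → ‖w‖ = 1 → eval ![z, w] Q ≠ 0) :
    (reverseX0 r).IsStable := by
  have hr₀ : r ≠ 0 := by rintro rfl; exact hr (dvd_zero _)
  obtain ⟨w₀, hw₀, hq₀⟩ := exists_norm_eq_one_eval_zero_reverseX0_ne_zero hr₀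
  refine isStable_of_ne_zero_on_circle (fun z w hz hw h => ?_) hw₀.le fun z hz h => ?_
  · have hz₀ : z ≠ 0 := ne_zero_of_norm_ne_zero (hz.symm ▸ one_ne_zero)
    change eval (Fin.cons z ![w]) _ = 0 at h
    rw [eval_cons_reverseX0_eq_zero_iff r hz₀] at h
    exact hPstab z⁻¹ w (by rw [norm_inv, hz, inv_one]) hw
      (map_eq_zero_of_dvd_pow (eval _) (k := 1) (by simpa using hrP) h)
  · rcases eq_or_ne z 0 with rfl | hz₀
    · exact hq₀ h
    change eval (Fin.cons z ![w₀]) _ = 0 at h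
    rw [eval_cons_reverseX0_eq_zero_iff r hz₀] at h
    exact hQstab (starRingEnd ℂ z) w₀ (by rwa [Complex.norm_conj]) hw₀
      (eval_eq_zero_of_eval_conjReflect_eq_zero hQ hz₀ hw₀ (map_eq_zero_of_dvd_pow _ hrQ h))

end MvPolynomial

open MvPolynomial

theorem fejer_riesz_splitting_general (n m : ℕ) (P Q : MvPolynomial (Fin 2) ℂ)
    (hPdeg : ∀ d ∈ P.support, d 0 ≤ n ∧ d 1 ≤ m)
    (hQdeg : ∀ d ∈ Q.support, d 0 ≤ n ∧ d 1 ≤ m)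
    (hPz : ¬ (X 0 ∣ P))
    (hPstab : ∀ z w : ℂ, ‖z‖ = 1 → ‖w‖ ≤ 1 → eval ![z, w] P ≠ 0)
    (hQstab : ∀ z w : ℂ, ‖z‖ ≤ 1 → ‖w‖ = 1 → eval ![z, w] Q ≠ 0)
    (habs : ∀ z w : ℂ, ‖z‖ = 1 → ‖w‖ = 1 →
      ‖eval ![z, w] P‖ = ‖eval ![z, w] Q‖) :
    ∃ (p q qrev : MvPolynomial (Fin 2) ℂ) (n1 m1 n2 m2 : ℕ),
      (∀ z w : ℂ, ‖z‖ ≤ 1 → ‖w‖ ≤ 1 → eval ![z, w] p ≠ 0) ∧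
      (∀ z w : ℂ, ‖z‖ ≤ 1 → ‖w‖ ≤ 1 → eval ![z, w] q ≠ 0) ∧
      p.degreeOf 0 = n1 ∧ p.degreeOf 1 = m1 ∧
      q.degreeOf 0 = n2 ∧ q.degreeOf 1 = m2 ∧
      n1 + n2 ≤ n ∧ m1 + m2 ≤ m ∧
      (∀ z w : ℂ, z ≠ 0 → eval ![z, w] qrev = z ^ n2 * eval ![1 / z, w] q) ∧
      P = p * qrev := by
  have hP₀ : P ≠ 0 := by rintro rfl; exact hPz (dvd_zero _)
  have hbox {f : MvPolynomial (Fin 2) ℂ} (hf : ∀ d ∈ f.support, d 0 ≤ n ∧ d 1 ≤ m) :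
      ∀ d ∈ f.support, d ≤ Finsupp.single 0 n + Finsupp.single 1 m := fun d hd =>
    Finsupp.le_def.2 (Fin.forall_fin_two.2 (by simpa using hf d hd))
  have hident := mul_conjReflect_eq (hbox hPdeg) (hbox hQdeg) <| Fin.forall_fin_succ_pi.2
    fun z => Fin.forall_fin_succ_pi.2 fun w => Fin.forall_fin_zero_pi.2 fun hx =>
      habs z w (hx 0) (hx 1)
  obtain ⟨p, qrev, rfl, ⟨k, hpQ⟩, ⟨l, hqrevQ⟩⟩ := exists_mul_eq_dvd_pow_of_dvd_mul hP₀ (Dvd.intro _ hident)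
  have hp : p.IsStable := isStable_of_ne_zero_on_circle
    (fun z w hz hw h => hPstab z w hz hw (by rw [map_mul, h, zero_mul])) norm_one.le
    fun z hz h => hQstab z 1 hz norm_one (map_eq_zero_of_dvd_pow (eval _) hpQ h)
  have hqrev : ¬ X 0 ∣ qrev := fun h => hPz (h.mul_left p)
  have hq := isStable_reverseX0 (dvd_mul_left qrev p) hqrevQ hqrev (hbox hQdeg) hPstab hQstab
  have hp₀ : p ≠ 0 := left_ne_zero_of_mul hP₀
  refine ⟨p, reverseX0 qrev, qrev, _, _, _, _, hp, hq, rfl, rfl, rfl, rfl, ?_, ?_,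
    fun z w hz => ?_, rfl⟩
  · exact (degreeOf_add_degreeOf_reverseX0_le hp₀ hqrev 0).trans
      (degreeOf_le_iff.2 fun d hd => (hPdeg d hd).1)
  · exact (degreeOf_add_degreeOf_reverseX0_le hp₀ hqrev 1).trans
      (degreeOf_le_iff.2 fun d hd => (hPdeg d hd).2)
  · rw [degreeOf_zero_reverseX0 hqrev, one_div, mul_comm]
    exact (eval_cons_reverseX0_mul_pow qrev hz ![w]).symm

/-- **Fejér–Riesz paper, splitting argument in the proof of Theorem 2.5.**
Let `P, Q ∈ ℂ[z,w]` be polynomials of degree at most `(n,m)`, neither divisible by `z` nor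
by `w`, such that `P(z,w) ≠ 0` for `|z| = 1`, `|w| ≤ 1`, `Q(z,w) ≠ 0` for `|z| ≤ 1`,
`|w| = 1`, and `|P| = |Q|` on the torus `|z| = |w| = 1`. Then there are stable polynomials
`p`, `q` of degrees `(n₁,m₁)` and `(n₂,m₂)` with `n₁ + n₂ ≤ n`, `m₁ + m₂ ≤ m`, such that
`P(z,w) = p(z,w)·z^{n₂}·q(1/z,w)`, where `z^{n₂}·q(1/z,w)` is the polynomial `qrev`
obtained by reversing the coefficients of `q` in `z`. -/
theorem fejer_riesz_splitting (n m : ℕ) (P Q : MvPolynomial (Fin 2) ℂ)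
    (hPdeg : ∀ d ∈ P.support, d 0 ≤ n ∧ d 1 ≤ m)
    (hQdeg : ∀ d ∈ Q.support, d 0 ≤ n ∧ d 1 ≤ m)
    (hPz : ¬ (X 0 ∣ P)) (hPw : ¬ (X 1 ∣ P))
    (hQz : ¬ (X 0 ∣ Q)) (hQw : ¬ (X 1 ∣ Q))
    (hPstab : ∀ z w : ℂ, ‖z‖ = 1 → ‖w‖ ≤ 1 → eval ![z, w] P ≠ 0)
    (hQstab : ∀ z w : ℂ, ‖z‖ ≤ 1 → ‖w‖ = 1 → eval ![z, w] Q ≠ 0)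
    (habs : ∀ z w : ℂ, ‖z‖ = 1 → ‖w‖ = 1 →
      ‖eval ![z, w] P‖ = ‖eval ![z, w] Q‖) :
    ∃ (p q qrev : MvPolynomial (Fin 2) ℂ) (n1 m1 n2 m2 : ℕ),
      (∀ z w : ℂ, ‖z‖ ≤ 1 → ‖w‖ ≤ 1 → eval ![z, w] p ≠ 0) ∧
      (∀ z w : ℂ, ‖z‖ ≤ 1 → ‖w‖ ≤ 1 → eval ![z, w] q ≠ 0) ∧
      p.degreeOf 0 = n1 ∧ p.degreeOf 1 = m1 ∧
      q.degreeOf 0 = n2 ∧ q.degreeOf 1 = m2 ∧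
      n1 + n2 ≤ n ∧ m1 + m2 ≤ m ∧
      (∀ z w : ℂ, z ≠ 0 → eval ![z, w] qrev = z ^ n2 * eval ![1 / z, w] q) ∧
      P = p * qrev :=
  fejer_riesz_splitting_general n m P Q hPdeg hQdeg hPz hPstab hQstab habs
end

section
/- Let p, q ∈ ℂ[z,w] be stable polynomials of degrees (n₁,m₁) and (n₂,m₂) respectively. Then the polynomial P(z,w) = p(z,w)·z^{n₂}·q(1/z, w) has degree exactly (n₁+n₂, m₁+m₂), and P is divisible neither by z nor by w (i.e., P(0,w) is not identically zero as a polynomial in w, and P(z,0) is not identically zero as a polynomial in z). -/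
/-!
Polynomials over `ℂ` that agree wherever `z ≠ 0` are equal, so `P = p * Q`, where
`Q = z ^ n₂ q(1/z, w)` is the reversal of `q` in `z`. Stability at `(0, 0)` makes the constant
terms of `p` and `q` nonzero, so reversal preserves both degrees of `q`, and degrees add in the
domain `ℂ[z, w]`. As `z` is prime, `z ∣ P` would give `z ∣ p`, impossible since
`p(0, 0) ≠ 0`, or `z ∣ Q`, impossible since the `z`-constant coefficient of `Q` is the leading
`z`-coefficient of `q`. Finally `P(1, 0) = p(1, 0) q(1, 0) ≠ 0`, so `w ∤ P`.
-/

open MvPolynomial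

theorem Polynomial.eval_reflect_eq_pow_mul {K : Type*} [Field K] {f : Polynomial K} {N : ℕ}
    (hf : f.natDegree ≤ N) {z : K} (hz : z ≠ 0) :
    (f.reflect N).eval z = z ^ N * f.eval z⁻¹ := by
  let _ : Invertible z⁻¹ := invertibleOfNonzero (inv_ne_zero hz)
  have key : (f.reflect N).eval z * z⁻¹ ^ N = f.eval z⁻¹ := by
    simpa only [invOf_eq_inv, inv_inv, Polynomial.eval₂_id] using
      eval₂_reflect_mul_pow (RingHom.id K) z⁻¹ N f hf
  rw [← key, mul_left_comm, ← mul_pow, mul_inv_cancel₀ hz, one_pow, mul_one]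

namespace MvPolynomial

variable {R : Type*} {n : ℕ}

section CommSemiring

variable [CommSemiring R]

/-- `z ^ (degreeOf 0 q) * q(1/z, w)` for `z = X 0`: the reversal of `q` as a polynomial in `X 0`. -/
noncomputable def reverseZero (q : MvPolynomial (Fin (n + 1)) R) : MvPolynomial (Fin (n + 1)) R :=
  (finSuccEquiv R n).symm (finSuccEquiv R n q).reverse

theorem finSuccEquiv_reverseZero (q : MvPolynomial (Fin (n + 1)) R) :
    finSuccEquiv R n (reverseZero q) = (finSuccEquiv R n q).reverse :=
  AlgEquiv.apply_symm_apply _ _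

theorem coeff_cons_reverseZero (q : MvPolynomial (Fin (n + 1)) R) (k : ℕ) (m : Fin n →₀ ℕ) :
    coeff (Finsupp.cons k m) (reverseZero q) =
      coeff (Finsupp.cons (Polynomial.revAt (q.degreeOf 0) k) m) q := by
  rw [← finSuccEquiv_coeff_coeff, finSuccEquiv_reverseZero, Polynomial.coeff_reverse,
    natDegree_finSuccEquiv, finSuccEquiv_coeff_coeff]

theorem degreeOf_succ_le_of_coeff_cons_eq {f g : MvPolynomial (Fin (n + 1)) R} (e : ℕ → ℕ)
    (h : ∀ k m, coeff (Finsupp.cons k m) f = coeff (Finsupp.cons (e k) m) g) (j : Fin n) :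
    f.degreeOf j.succ ≤ g.degreeOf j.succ := by
  rw [degreeOf_le_iff]
  intro d hd
  rw [mem_support_iff, ← Finsupp.cons_tail d, h] at hd
  simpa only [Finsupp.cons_succ, Finsupp.tail_apply] using
    monomial_le_degreeOf j.succ (mem_support_iff.2 hd)

theorem degreeOf_succ_reverseZero (q : MvPolynomial (Fin (n + 1)) R) (j : Fin n) :
    (reverseZero q).degreeOf j.succ = q.degreeOf j.succ :=
  le_antisymm (degreeOf_succ_le_of_coeff_cons_eq _ (coeff_cons_reverseZero q) j)
    (degreeOf_succ_le_of_coeff_cons_eq (Polynomial.revAt (q.degreeOf 0))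
      (fun k m ↦ by rw [coeff_cons_reverseZero, Polynomial.revAt_invol]) j)

theorem degreeOf_zero_reverseZero {q : MvPolynomial (Fin (n + 1)) R} (hq : constantCoeff q ≠ 0) :
    (reverseZero q).degreeOf 0 = q.degreeOf 0 := by
  have hq' : (finSuccEquiv R n q).coeff 0 ≠ 0 := fun h ↦ hq <| by
    rw [constantCoeff_eq, ← Finsupp.cons_zero_zero, ← finSuccEquiv_coeff_coeff, h, coeff_zero]
  rw [← natDegree_finSuccEquiv, ← natDegree_finSuccEquiv, finSuccEquiv_reverseZero,
    Polynomial.reverse_natDegree, Polynomial.natTrailingDegree_eq_zero.2 (Or.inr hq'), Nat.sub_zero]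

theorem not_X_zero_dvd_reverseZero {q : MvPolynomial (Fin (n + 1)) R} (hq : q ≠ 0) :
    ¬ X 0 ∣ reverseZero q := by
  intro h
  have h' := map_dvd (finSuccEquiv R n) h
  rw [finSuccEquiv_X_zero, finSuccEquiv_reverseZero, Polynomial.X_dvd_iff,
    Polynomial.coeff_zero_reverse, Polynomial.leadingCoeff_eq_zero,
    EmbeddingLike.map_eq_zero_iff] at h'
  exact hq h'

theorem not_X_dvd_of_eval_ne_zero {σ : Type*} {f : MvPolynomial σ R} {x : σ → R} {i : σ}
    (hi : x i = 0) (hf : eval x f ≠ 0) : ¬ X i ∣ f := by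
  rintro ⟨g, rfl⟩
  simp [hi] at hf

end CommSemiring

theorem eval_cons_reverseZero {K : Type*} [Field K] (q : MvPolynomial (Fin (n + 1)) K)
    (x : Fin n → K) {z : K} (hz : z ≠ 0) :
    eval (Fin.cons z x) (reverseZero q) = z ^ q.degreeOf 0 * eval (Fin.cons z⁻¹ x) q := by
  rw [eval_eq_eval_mv_eval', eval_eq_eval_mv_eval', finSuccEquiv_reverseZero, Polynomial.reverse,
    natDegree_finSuccEquiv, ← Polynomial.reflect_map]
  refine Polynomial.eval_reflect_eq_pow_mul ?_ hz
  exact Polynomial.natDegree_map_le.trans (natDegree_finSuccEquiv q).le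

end MvPolynomial

/-- **Fejér–Riesz paper, observation (i) in the proof of Theorem 2.10.**
Let `p, q ∈ ℂ[z,w]` be stable polynomials of degrees `(n₁,m₁)` and `(n₂,m₂)` respectively.
Then the polynomial `P(z,w) = p(z,w)·z^{n₂}·q(1/z,w)` (where `z^{n₂}·q(1/z,w)` is the
reversal of the coefficients of `q` in `z`) has degree exactly `(n₁+n₂, m₁+m₂)` and is
divisible neither by `z` nor by `w`. -/
theorem fejer_riesz_thm_2_10_obs_i (n1 m1 n2 m2 : ℕ) (p q : MvPolynomial (Fin 2) ℂ)
    (hpdeg : p.degreeOf 0 = n1 ∧ p.degreeOf 1 = m1)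
    (hqdeg : q.degreeOf 0 = n2 ∧ q.degreeOf 1 = m2)
    (hpstab : ∀ z w : ℂ, ‖z‖ ≤ 1 → ‖w‖ ≤ 1 → eval ![z, w] p ≠ 0)
    (hqstab : ∀ z w : ℂ, ‖z‖ ≤ 1 → ‖w‖ ≤ 1 → eval ![z, w] q ≠ 0)
    (P : MvPolynomial (Fin 2) ℂ)
    (hP : ∀ z w : ℂ, z ≠ 0 →
      eval ![z, w] P = eval ![z, w] p * (z ^ n2 * eval ![1 / z, w] q)) :
    P.degreeOf 0 = n1 + n2 ∧ P.degreeOf 1 = m1 + m2 ∧ ¬ (X 0 ∣ P) ∧ ¬ (X 1 ∣ P) := by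
  obtain ⟨rfl, rfl⟩ := hpdeg
  obtain ⟨rfl, rfl⟩ := hqdeg
  have hzero : (![0, 0] : Fin 2 → ℂ) = 0 := by ext i; fin_cases i <;> rfl
  have hp00 : eval 0 p ≠ 0 := hzero ▸ hpstab 0 0 (by simp) (by simp)
  have hq00 : constantCoeff q ≠ 0 := by
    simpa [← eval_zero, hzero] using hqstab 0 0 (by simp) (by simp)
  have hp : p ≠ 0 := by rintro rfl; simp at hp00
  have hq : q ≠ 0 := by rintro rfl; simp at hq00
  have hP_eq : P = p * reverseZero q := by
    refine funext_set (fun _ ↦ {0}ᶜ) (fun _ ↦ (Set.finite_singleton 0).infinite_compl) ?_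
    intro x hx
    have hx0 : x 0 ≠ 0 := hx 0 trivial
    have hx' : x = ![x 0, x 1] := by ext i; fin_cases i <;> rfl
    rw [hx', map_mul, hP _ _ hx0, one_div]
    exact congrArg _ (eval_cons_reverseZero q ![x 1] hx0).symm
  have hQ : reverseZero q ≠ 0 := fun h ↦ not_X_zero_dvd_reverseZero hq (h ▸ dvd_zero _)
  refine ⟨?_, ?_, ?_, ?_⟩
  · rw [hP_eq, degreeOf_mul_eq hp hQ, degreeOf_zero_reverseZero hq00]
  · rw [hP_eq, degreeOf_mul_eq hp hQ, show (1 : Fin 2) = Fin.succ 0 from rfl,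
      degreeOf_succ_reverseZero]
  · rw [hP_eq]
    intro h
    rcases X_prime.dvd_or_dvd h with hp_dvd | hQ_dvd
    · exact not_X_dvd_of_eval_ne_zero (i := 0) rfl hp00 hp_dvd
    · exact not_X_zero_dvd_reverseZero hq hQ_dvd
  · refine not_X_dvd_of_eval_ne_zero (x := ![1, 0]) rfl ?_
    rw [hP 1 0 one_ne_zero, one_pow, one_mul, div_one]
    exact mul_ne_zero (hpstab 1 0 (by simp) (by simp)) (hqstab 1 0 (by simp) (by simp))
end

section
/- Let P ∈ ℂ[z,w] be a polynomial of degree (n₀,m₀) which is divisible neither by z nor by w, and let n, m be nonnegative integers. If the Laurent polynomial P(z,w)·P̄(1/z,1/w) lies in the span of {z^k w^l : |k| ≤ n, |l| ≤ m} (where P̄ denotes P with conjugated coefficients), then n₀ ≤ n and m₀ ≤ m. -/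
/-!
Write `P = ∑ⱼ pⱼ(w) zʲ`. In `P(z,w)·P̄(1/z,1/w)` the lowest power of `z` is `z^(-n₀)`, with
coefficient `p₀(w)·p̄ₙ₀(1/w)`. Here `p₀ ≠ 0` since `z ∤ P` and `p̄ₙ₀ ≠ 0` since `P` has degree `n₀`
in `z`, and a product `f(w)·g(1/w)` of nonzero polynomials cannot vanish on all of `ℂˣ`, since
each factor has finitely many zeros. Hence `z^(-n₀)` occurs, so `n₀ ≤ n`; symmetrically `m₀ ≤ m`.
-/

open Finset MvPolynomial

namespace Polynomial

variable {K : Type*} [Field K]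

theorem eval_reflect_of_ne_zero {f : K[X]} {N : ℕ} (hf : f.natDegree ≤ N) {z : K} (hz : z ≠ 0) :
    (reflect N f).eval z = f.eval z⁻¹ * z ^ N := by
  let := invertibleOfNonzero (inv_ne_zero hz)
  have h := eval₂_reflect_mul_pow (RingHom.id K) z⁻¹ N f hf
  rw [invOf_eq_inv, inv_inv] at h
  rw [eval, eval, ← h, mul_assoc, ← mul_pow, inv_mul_cancel₀ hz, one_pow, mul_one]

theorem eq_zero_or_eq_zero_of_eval_mul_eval_inv_eq_zero [Infinite K] {f g : K[X]}
    (h : ∀ w ≠ 0, f.eval w * g.eval w⁻¹ = 0) : f = 0 ∨ g = 0 := by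
  by_contra! hfg
  have hsub : {0}ᶜ ⊆ {w | f.IsRoot w} ∪ Inv.inv ⁻¹' {w | g.IsRoot w} := fun w hw =>
    mul_eq_zero.mp (h w hw)
  exact (Set.finite_singleton 0).infinite_compl <|
    ((finite_setOfPred_isRoot hfg.1).union
      ((finite_setOfPred_isRoot hfg.2).preimage inv_injective.injOn)).subset hsub

theorem coeff_zero_mul_coeff_eq_zero_of_eval_mul_eval_inv_eq_sum [Infinite K] {f g : K[X]}
    {n N : ℕ} (hg : g.natDegree ≤ N) (hnN : n < N) (c : ℤ → K)
    (h : ∀ z ≠ 0, f.eval z * g.eval z⁻¹ = ∑ k ∈ Icc (-n : ℤ) n, c k * z ^ k) :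
    f.coeff 0 * g.coeff N = 0 := by
  have hpos : ∀ k ∈ Icc (-n : ℤ) n, 0 < k + N := fun k hk => by
    have := (mem_Icc.mp hk).1; omega
  -- multiplying by `z ^ N` turns the identity into one between polynomials in `z`
  set F := f * reflect N g - ∑ k ∈ Icc (-n : ℤ) n, C (c k) * X ^ (k + N).toNat
  have hF : F = 0 := by
    refine eq_zero_of_infinite_isRoot _ ((Set.finite_singleton 0).infinite_compl.mono
      fun z hz => ?_)
    have hz : z ≠ 0 := hz
    have hpow : ∀ k ∈ Icc (-n : ℤ) n, c k * z ^ (k + N).toNat = c k * z ^ k * z ^ N :=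
      fun k hk => by
        rw [← zpow_natCast, Int.toNat_of_nonneg (hpos k hk).le, zpow_add₀ hz, zpow_natCast,
          mul_assoc]
    change F.eval z = 0
    simp only [F, eval_sub, eval_mul, eval_reflect_of_ne_zero hg hz, eval_finsetSum,
      eval_C, eval_pow, eval_X]
    rw [sum_congr rfl hpow, ← sum_mul, ← mul_assoc, h z hz, sub_self]
  have h0 := congrArg (coeff · 0) hF
  simp only [F, coeff_sub, mul_coeff_zero, coeff_reflect, revAt_le (Nat.zero_le N),
    Nat.sub_zero, finsetSum_coeff, coeff_C_zero, coeff_X_pow, coeff_zero] at h0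
  rwa [sum_eq_zero fun k hk => by rw [if_neg (by have := hpos k hk; omega), mul_zero],
    sub_zero] at h0

end Polynomial

namespace MvPolynomial

theorem degreeOf_map_of_injective {R S σ : Type*} [CommSemiring R] [CommSemiring S] {f : R →+* S}
    (hf : Function.Injective f) (p : MvPolynomial σ R) (i : σ) :
    (map f p).degreeOf i = p.degreeOf i := by
  classical
  rw [degreeOf_def, degreeOf_def, degrees_map_of_injective p hf]

theorem X_zero_dvd_iff_coeff_finSuccEquiv_eq_zero {R : Type*} [CommSemiring R] {n : ℕ}
    {p : MvPolynomial (Fin (n + 1)) R} : X 0 ∣ p ↔ (finSuccEquiv R n p).coeff 0 = 0 := by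
  rw [← Polynomial.X_dvd_iff, ← finSuccEquiv_X_zero, map_dvd_iff]

theorem eval_eq_eval_uniqueAlgEquiv {R : Type*} [CommSemiring R] (p : MvPolynomial (Fin 1) R)
    (w : R) :
    eval ![w] p = (uniqueAlgEquiv R (Fin 1) p).eval w :=
  eval₂_uniqueAlgEquiv.symm

variable {K : Type*} [Field K] [Infinite K]

theorem degreeOf_zero_le_of_eval_mul_eval_inv_eq_sum {n : ℕ} {s : Finset ℤ}
    {P Q : MvPolynomial (Fin 2) K} (hP : ¬ X 0 ∣ P) (a : ℤ → ℤ → K)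
    (h : ∀ z w : K, z ≠ 0 → w ≠ 0 → eval ![z, w] P * eval ![z⁻¹, w⁻¹] Q =
      ∑ k ∈ Icc (-n : ℤ) n, ∑ l ∈ s, a k l * z ^ k * w ^ l) :
    Q.degreeOf 0 ≤ n := by
  by_contra! hn
  set N := Q.degreeOf 0
  set p := finSuccEquiv K 1 P
  set q := finSuccEquiv K 1 Q
  have hqN : q.natDegree = N := natDegree_finSuccEquiv Q
  -- `p.coeff 0 (w) * q.coeff N (w⁻¹)` is the coefficient of `z ^ (-N)`, which the right side lacks
  have hvanish : ∀ w ≠ 0, eval ![w] (p.coeff 0) * eval ![w⁻¹] (q.coeff N) = 0 := by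
    intro w hw
    have := Polynomial.coeff_zero_mul_coeff_eq_zero_of_eval_mul_eval_inv_eq_sum
      (f := p.map (eval ![w])) (g := q.map (eval ![w⁻¹]))
      (hqN ▸ Polynomial.natDegree_map_le) hn (fun k => ∑ l ∈ s, a k l * w ^ l) fun z hz => by
        rw [← eval_eq_eval_mv_eval', ← eval_eq_eval_mv_eval']
        refine (h z w hz hw).trans (sum_congr rfl fun k _ => ?_)
        rw [sum_mul]
        exact sum_congr rfl fun l _ => by ring
    simpa only [Polynomial.coeff_map] using this
  rcases Polynomial.eq_zero_or_eq_zero_of_eval_mul_eval_inv_eq_zero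
    (f := uniqueAlgEquiv K (Fin 1) (p.coeff 0)) (g := uniqueAlgEquiv K (Fin 1) (q.coeff N))
    fun w hw => by simpa only [eval_eq_eval_uniqueAlgEquiv] using hvanish w hw with h0 | hN
  · exact hP <| X_zero_dvd_iff_coeff_finSuccEquiv_eq_zero.mpr <|
      (map_eq_zero_iff _ (AlgEquiv.injective _)).mp h0
  · have hQ : Q = 0 := by
      rw [map_eq_zero_iff _ (AlgEquiv.injective _), ← hqN] at hN
      exact (map_eq_zero_iff _ (AlgEquiv.injective _)).mp (Polynomial.leadingCoeff_eq_zero.mp hN)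
    simp [N, hQ] at hn

theorem degreeOf_one_le_of_eval_mul_eval_inv_eq_sum {m : ℕ} {s : Finset ℤ}
    {P Q : MvPolynomial (Fin 2) K} (hP : ¬ X 1 ∣ P) (a : ℤ → ℤ → K)
    (h : ∀ z w : K, z ≠ 0 → w ≠ 0 → eval ![z, w] P * eval ![z⁻¹, w⁻¹] Q =
      ∑ k ∈ s, ∑ l ∈ Icc (-m : ℤ) m, a k l * z ^ k * w ^ l) :
    Q.degreeOf 1 ≤ m := by
  let σ := Equiv.swap (0 : Fin 2) 1
  have hswap : ∀ z w : K, ![z, w] ∘ σ = ![w, z] := fun z w => by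
    ext i; fin_cases i <;> rfl
  have hσ : σ 1 = 0 := Equiv.swap_apply_right 0 1
  rw [← degreeOf_rename_of_injective σ.injective 1, hσ]
  refine degreeOf_zero_le_of_eval_mul_eval_inv_eq_sum (s := s) (P := rename σ P) ?_
    (fun k l => a l k) fun z w hz hw => ?_
  · rwa [← map_dvd_iff (renameEquiv K σ) (a := X 1), renameEquiv_apply, rename_X, hσ] at hP
  · rw [eval_rename, eval_rename, hswap, hswap, h w z hw hz, sum_comm]
    exact sum_congr rfl fun k _ => sum_congr rfl fun l _ => by ring

end MvPolynomial

/-- **Fejér–Riesz paper, observation (ii) in the proof of Theorem 2.10.**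
Let `P ∈ ℂ[z,w]` have degree exactly `(n₀,m₀)` and be divisible neither by `z` nor by `w`.
If the Laurent polynomial `P(z,w)·P̄(1/z,1/w)` lies in the span of
`{z^k w^l : |k| ≤ n, |l| ≤ m}` — i.e. there are coefficients `a k l` with
`P(z,w)·P̄(1/z,1/w) = ∑_{|k| ≤ n} ∑_{|l| ≤ m} a k l · z^k·w^l` for all `z, w ≠ 0` —
then `n₀ ≤ n` and `m₀ ≤ m`. -/
theorem fejer_riesz_thm_2_10_obs_ii (n m n0 m0 : ℕ) (P : MvPolynomial (Fin 2) ℂ)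
    (hdeg : P.degreeOf 0 = n0 ∧ P.degreeOf 1 = m0)
    (hz : ¬ (X 0 ∣ P)) (hw : ¬ (X 1 ∣ P))
    (a : ℤ → ℤ → ℂ)
    (ha : ∀ z w : ℂ, z ≠ 0 → w ≠ 0 →
      eval ![z, w] P *
          eval ![1 / z, 1 / w] (MvPolynomial.map (starRingEnd ℂ) P) =
        ∑ k ∈ Finset.Icc (-(n : ℤ)) (n : ℤ), ∑ l ∈ Finset.Icc (-(m : ℤ)) (m : ℤ),
          a k l * z ^ k * w ^ l) :
    n0 ≤ n ∧ m0 ≤ m := by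
  simp only [one_div] at ha
  obtain ⟨rfl, rfl⟩ := hdeg
  have hconj := degreeOf_map_of_injective (starRingEnd ℂ).injective P
  exact ⟨hconj 0 ▸ degreeOf_zero_le_of_eval_mul_eval_inv_eq_sum hz a ha,
    hconj 1 ▸ degreeOf_one_le_of_eval_mul_eval_inv_eq_sum hw a ha⟩
end

section
/- Let h ∈ ℂ[z,w] be a polynomial of degree (k,l). If h(z,w) ≠ 0 whenever |z| ≤ 1 and |w| ≤ 1, and also z^k·h(1/z, w) ≠ 0 whenever |z| ≤ 1 and |w| ≤ 1 (where z^k·h(1/z,w) is the polynomial obtained by reversing the coefficients of h in z), then k = 0, i.e., h does not depend on z. -/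
open MvPolynomial

/-!
For `|w| ≤ 1` the slice `z ↦ h(z, w)` has no zero in the closed unit disc by stability of `h`,
and no zero `z` with `|z| > 1`, since `1/z` would be a zero of the reversal. Over `ℂ` a polynomial
without zeros is constant, so the coefficient of `z^k` in `h`, a polynomial in `w`, vanishes on
the whole disc, hence identically; as it is the leading coefficient in `z`, this forces `k = 0`.
-/

theorem ne_zero_of_ne_zero_of_reversal_ne_zero {𝕜 : Type*} [NormedDivisionRing 𝕜]
    {f g : 𝕜 → 𝕜} {k : ℕ} (hg : ∀ z ≠ 0, g z = z ^ k * f (1 / z))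
    (hf_ne : ∀ z, ‖z‖ ≤ 1 → f z ≠ 0) (hg_ne : ∀ z, ‖z‖ ≤ 1 → g z ≠ 0) (z : 𝕜) :
    f z ≠ 0 := by
  rcases le_or_gt ‖z‖ 1 with hz | hz
  · exact hf_ne z hz
  · have hz0 : z ≠ 0 := norm_pos_iff.mp (zero_lt_one.trans hz)
    intro hfz
    apply hg_ne z⁻¹ (by simpa only [norm_inv] using inv_le_one_of_one_le₀ hz.le)
    rw [hg z⁻¹ (inv_ne_zero hz0), one_div, inv_inv, hfz, mul_zero]

theorem MvPolynomial.degreeOf_zero_eq_zero_of_eval_cons_ne_zero {K : Type*} [Field K]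
    [IsAlgClosed K] {n : ℕ} {h : MvPolynomial (Fin (n + 1)) K} (s : Fin n → Set K)
    (hs : ∀ i, (s i).Infinite) (hne : ∀ w ∈ Set.pi .univ s, ∀ z, eval (Fin.cons z w) h ≠ 0) :
    h.degreeOf 0 = 0 := by
  set p := finSuccEquiv K n h
  have hslice_const : ∀ w ∈ Set.pi .univ s, (p.map (eval w)).natDegree = 0 := by
    intro w hw
    by_contra hdeg
    obtain ⟨z, hz⟩ := IsAlgClosed.eval_surjective hdeg 0
    exact hne w hw z (by rwa [eval_eq_eval_mv_eval'])
  by_contra hk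
  have hlead : p.leadingCoeff = 0 := by
    refine funext_set s hs fun w hw ↦ ?_
    rw [Polynomial.leadingCoeff, natDegree_finSuccEquiv, map_zero, ← Polynomial.coeff_map]
    exact Polynomial.coeff_eq_zero_of_natDegree_lt (by rw [hslice_const w hw]; omega)
  have h_eq_zero : h = 0 := by simpa [p] using hlead
  simp [h_eq_zero] at hk

/-- **Fejér–Riesz paper, observation in the proof of Corollary 2.9.**
Let `h ∈ ℂ[z,w]` be a polynomial of degree `(k,l)`. If both `h` and its reversal in `z`,
`z^k·h(1/z,w)` (here the polynomial `hrev`), are stable (nonzero for `|z| ≤ 1` and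
`|w| ≤ 1`), then `k = 0`, i.e. `h` does not depend on `z`. -/
theorem fejer_riesz_cor_2_9_obs (k l : ℕ) (h hrev : MvPolynomial (Fin 2) ℂ)
    (hdeg : h.degreeOf 0 = k ∧ h.degreeOf 1 = l)
    (hchar : ∀ z w : ℂ, z ≠ 0 → eval ![z, w] hrev = z ^ k * eval ![1 / z, w] h)
    (hstab : ∀ z w : ℂ, ‖z‖ ≤ 1 → ‖w‖ ≤ 1 → eval ![z, w] h ≠ 0)
    (hstabrev : ∀ z w : ℂ, ‖z‖ ≤ 1 → ‖w‖ ≤ 1 →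
      eval ![z, w] hrev ≠ 0) :
    k = 0 := by
  have hdisc : (Metric.closedBall (0 : ℂ) 1).Infinite :=
    infinite_of_mem_nhds 0 (Metric.closedBall_mem_nhds 0 one_pos)
  rw [← hdeg.1]
  refine degreeOf_zero_eq_zero_of_eval_cons_ne_zero (fun _ ↦ Metric.closedBall 0 1)
    (fun _ ↦ hdisc) fun w hw z ↦ ?_
  have hw : ‖w 0‖ ≤ 1 := by simpa using hw 0 trivial
  have hcons : (Fin.cons z w : Fin 2 → ℂ) = ![z, w 0] := by
    ext i; fin_cases i <;> rfl
  rw [hcons]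
  exact ne_zero_of_ne_zero_of_reversal_ne_zero (fun z hz ↦ hchar z (w 0) hz)
    (fun z hz ↦ hstab z (w 0) hz hw) (fun z hz ↦ hstabrev z (w 0) hz hw) z
end
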